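/- arXiv:math/0508633 — 11 statements merged into one kernel-verified Lean document; each statement's English description precedes it below -/
import Mathlib

section
/- Let V be a real vector space with a Lorentzian form ℓ, C one of the two closed convex cones {v : ℓ(v,v) ≥ 0} ∩ (half-space), and Γ a group acting freely and properly on V by affine transformations whose linear parts preserve ℓ and C. Then the quotient V/Γ admits no nontrivial closed timelike curve if and only if for every v ∈ V and every γ ∈ Γ with γ ≠ e, one has ℓ(γ(v) − v, γ(v) − v) < 0. -/
/-! Since `C ∪ -C` is the set of non-spacelike vectors, it suffices to see that excluding
displacements in `C` also excludes those in `-C`: the displacement of `γ⁻¹` at `γ v` is the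
negative of the displacement of `γ` at `v`. -/

/-- A symmetric bilinear form of Lorentzian signature `(+,−,…,−)`:
there is an orthogonal basis with one vector of square `1` and all others of square `-1`. -/
def IsLorentzian {V : Type*} [AddCommGroup V] [Module ℝ V]
    (ℓ : V →ₗ[ℝ] V →ₗ[ℝ] ℝ) : Prop :=
  (∀ u w : V, ℓ u w = ℓ w u) ∧
  ∃ (n : ℕ) (e : Module.Basis (Fin (n + 1)) ℝ V),
    (∀ i j, i ≠ j → ℓ (e i) (e j) = 0) ∧ ℓ (e 0) (e 0) = 1 ∧
    ∀ i, i ≠ 0 → ℓ (e i) (e i) = -1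

namespace AffineEquiv

variable {k V : Type*} [Ring k] [AddCommGroup V] [Module k V]

theorem inv_apply_apply_sub (γ : V ≃ᵃ[k] V) (v : V) : γ⁻¹ (γ v) - γ v = -(γ v - v) := by
  rw [inv_def, symm_apply_apply, neg_sub]

theorem forall_sub_mem_iff_forall_sub_mem_union_neg (Γ : Subgroup (V ≃ᵃ[k] V)) (C : Set V) :
    (∀ v : V, ∀ γ ∈ Γ, γ v - v ∈ C → γ = 1) ↔
      ∀ v : V, ∀ γ ∈ Γ, γ v - v ∈ C ∪ -C → γ = 1 := by
  refine ⟨fun h v γ hγ hmem => ?_, fun h v γ hγ hmem => h v γ hγ (Or.inl hmem)⟩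
  rcases hmem with hC | hnegC
  · exact h v γ hγ hC
  · have hinv : γ⁻¹ (γ v) - γ v ∈ C := by
      rw [inv_apply_apply_sub]
      exact hnegC
    exact inv_eq_one.mp (h (γ v) γ⁻¹ (inv_mem hγ) hinv)

end AffineEquiv

theorem causal_iff_neg_displacement_general
    {V : Type*} [AddCommGroup V] [Module ℝ V]
    (ℓ : V →ₗ[ℝ] V →ₗ[ℝ] ℝ)
    (C : Set V)
    (hCunion : C ∪ (-C) = {v : V | 0 ≤ ℓ v v})
    (Γ : Subgroup (V ≃ᵃ[ℝ] V)) :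
    (∀ v : V, ∀ γ ∈ Γ, γ v - v ∈ C → γ = 1) ↔
      (∀ v : V, ∀ γ ∈ Γ, γ ≠ 1 → ℓ (γ v - v) (γ v - v) < 0) := by
  rw [AffineEquiv.forall_sub_mem_iff_forall_sub_mem_union_neg, hCunion]
  refine forall_congr' fun v => forall₂_congr fun γ _ => ?_
  rw [Set.mem_ofPred_eq, ← not_lt, not_imp_comm]

/-- Lemma 3.1 (mcaus): for a group `Γ` of affine transformations of Minkowski space
whose linear parts preserve the Lorentzian form `ℓ` and one of the two closed convex
round cones `C`, acting freely, the quotient `V/Γ` is causal (equivalently, `γ v ∈ v + C`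
implies `γ = 1`) if and only if `ℓ(γ v − v, γ v − v) < 0` for all `v` and all `γ ≠ 1`. -/
theorem causal_iff_neg_displacement
    {V : Type*} [AddCommGroup V] [Module ℝ V]
    (ℓ : V →ₗ[ℝ] V →ₗ[ℝ] ℝ) (hL : IsLorentzian ℓ)
    (C : Set V)
    (hCcone : ∀ (t : ℝ) (v : V), 0 ≤ t → v ∈ C → t • v ∈ C)
    (hCconv : Convex ℝ C)
    (hCunion : C ∪ (-C) = {v : V | 0 ≤ ℓ v v})
    (hCpointed : C ∩ (-C) = {(0 : V)})
    (Γ : Subgroup (V ≃ᵃ[ℝ] V))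
    (hpres : ∀ γ ∈ Γ, ∀ u w : V, ℓ (γ.linear u) (γ.linear w) = ℓ u w)
    (hCinv : ∀ γ ∈ Γ, γ.linear '' C = C)
    (hfree : ∀ γ ∈ Γ, γ ≠ 1 → ∀ v : V, γ v ≠ v) :
    (∀ v : V, ∀ γ ∈ Γ, γ v - v ∈ C → γ = 1) ↔
      (∀ v : V, ∀ γ ∈ Γ, γ ≠ 1 → ℓ (γ v - v) (γ v - v) < 0) :=
  causal_iff_neg_displacement_general ℓ C hCunion Γ
end

section
/- Let C be a pointed generating closed convex cone in a finite-dimensional real vector space V and G a subgroup of GL(V) preserving C. The following are equivalent: (1) G has a fixed point in the interior of C; (2) G is bounded in GL(V) (its closure is compact); (3) every G-orbit in Int(C) is bounded; (4) some G-orbit in Int(C) is bounded. -/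
/-!
Since `C` is closed and pointed, compactness of the unit sphere makes it a normal cone:
`u ± x ∈ C` forces `δ ‖x‖ ≤ ‖u‖` for a fixed `δ > 0`. If `v` is interior, with `v ± y ∈ C` for
all `‖y‖ ≤ ε`, then every `g ∈ G` satisfies `δ ε ‖g‖ ≤ ‖g v‖`, so one bounded orbit in `Int C`
bounds `G`. Conversely, if `G` is bounded, the invertible elements of the closure of `G` form a
compact group, and averaging an interior orbit over its Haar measure gives a `G`-fixed vector,
which stays interior because the orbit is a compact subset of the open set `Int C`.
-/

open Set Topology MeasureTheory

section ConeGeometry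

variable {V : Type*} [NormedAddCommGroup V] [NormedSpace ℝ V] {C : Set V}

theorem exists_pos_mul_norm_le_of_sub_mem_of_add_mem [FiniteDimensional ℝ V]
    (hCclosed : IsClosed C) (hCcone : ∀ (t : ℝ) (v : V), 0 ≤ t → v ∈ C → t • v ∈ C)
    (hCpointed : C ∩ (-C) = {0}) :
    ∃ δ > 0, ∀ u x : V, u - x ∈ C → u + x ∈ C → δ * ‖x‖ ≤ ‖u‖ := by
  set K : Set (V × V) := {p | ‖p.1‖ ≤ 1 ∧ ‖p.2‖ = 1 ∧ p.1 - p.2 ∈ C ∧ p.1 + p.2 ∈ C}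
  have hKcompact : IsCompact K := by
    refine Metric.isCompact_of_isClosed_isBounded ?_ ?_
    · exact (isClosed_le continuous_fst.norm continuous_const).inter <|
        (isClosed_eq continuous_snd.norm continuous_const).inter <|
        (hCclosed.preimage (continuous_fst.sub continuous_snd)).inter
          (hCclosed.preimage (continuous_fst.add continuous_snd))
    · refine (Metric.isBounded_closedBall (x := (0 : V × V)) (r := 1)).subset ?_
      rintro p ⟨h1, h2, -⟩
      simpa [Prod.norm_def] using max_le h1 h2.le
  have hKpos : ∀ p ∈ K, 0 < ‖p.1‖ := by
    rintro ⟨u, x⟩ ⟨-, hx, hsub, hadd⟩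
    refine norm_pos_iff.2 fun (hu : u = 0) => ?_
    subst hu
    have hx0 : x ∈ C ∩ -C := ⟨by simpa using hadd, by simpa using hsub⟩
    rw [hCpointed, mem_singleton_iff] at hx0
    simp [hx0] at hx
  obtain ⟨a, ha, haK⟩ := hKcompact.exists_forall_le' continuous_fst.norm.continuousOn hKpos
  refine ⟨min a 1, by positivity, fun u x hsub hadd => ?_⟩
  rcases eq_or_ne x 0 with rfl | hx
  · simp
  have hxpos : 0 < ‖x‖ := norm_pos_iff.2 hx
  have hscaled : min a 1 ≤ ‖‖x‖⁻¹ • u‖ := by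
    by_cases hu : ‖‖x‖⁻¹ • u‖ ≤ 1
    · refine (min_le_left _ _).trans (haK (‖x‖⁻¹ • u, ‖x‖⁻¹ • x) ⟨hu, ?_, ?_, ?_⟩)
      · simp [norm_smul, hxpos.ne']
      · rw [← smul_sub]; exact hCcone _ _ (by positivity) hsub
      · rw [← smul_add]; exact hCcone _ _ (by positivity) hadd
    · exact (min_le_right _ _).trans (not_le.1 hu).le
  rw [norm_smul, norm_inv, norm_norm, le_inv_mul_iff₀ hxpos] at hscaled
  linarith

theorem ContinuousLinearMap.opNorm_le_of_mapsTo_of_closedBall_subset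
    {W : Type*} [NormedAddCommGroup W] [NormedSpace ℝ W] {D : Set W} {δ ε : ℝ}
    (hδ : 0 < δ) (hε : 0 < ε) (hD : ∀ u x : W, u - x ∈ D → u + x ∈ D → δ * ‖x‖ ≤ ‖u‖)
    {v : V} (hball : Metric.closedBall v ε ⊆ C) {f : V →L[ℝ] W} (hf : MapsTo f C D) :
    ‖f‖ ≤ ‖f v‖ / (δ * ε) := by
  refine f.opNorm_le_of_unit_norm (by positivity) fun x hx => ?_
  have hsub : v - ε • x ∈ C := hball (by simp [norm_smul, hx, abs_of_pos hε])
  have hadd : v + ε • x ∈ C := hball (by simp [norm_smul, hx, abs_of_pos hε])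
  have hbound := hD _ _ (by simpa using hf hsub) (by simpa using hf hadd)
  rw [norm_smul, Real.norm_of_nonneg hε.le] at hbound
  rw [le_div_iff₀ (by positivity)]
  linarith

theorem Convex.interior_nonempty_of_forall_eq_sub [FiniteDimensional ℝ V] (hC : Convex ℝ C)
    (hgen : ∀ v : V, ∃ c₁ ∈ C, ∃ c₂ ∈ C, v = c₁ - c₂) : (interior C).Nonempty := by
  obtain ⟨c, hc, -⟩ := hgen 0
  rw [hC.interior_nonempty_iff_affineSpan_eq_top,
    AffineSubspace.affineSpan_eq_top_iff_vectorSpan_eq_top_of_nonempty ℝ V V ⟨c, hc⟩,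
    vectorSpan_def, eq_top_iff]
  intro v _
  obtain ⟨c₁, hc₁, c₂, hc₂, rfl⟩ := hgen v
  exact Submodule.subset_span (vsub_mem_vsub hc₁ hc₂)

end ConeGeometry

theorem Convex.average_mem_interior_of_continuous {α E : Type*} [TopologicalSpace α]
    [CompactSpace α] [MeasurableSpace α] [OpensMeasurableSpace α] {μ : Measure α}
    [IsFiniteMeasure μ] [NeZero μ] [NormedAddCommGroup E] [NormedSpace ℝ E] [CompleteSpace E]
    {s : Set E} (hs : Convex ℝ s) (hsc : IsClosed s) {f : α → E} (hf : Continuous f)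
    (hfs : ∀ a, f a ∈ interior s) : ⨍ a, f a ∂μ ∈ interior s := by
  obtain ⟨δ, hδ, hδs⟩ := (isCompact_range hf).exists_thickening_subset_open isOpen_interior
    (range_subset_iff.2 hfs)
  have hfi : Integrable f μ := hf.integrable_of_hasCompactSupport (.of_compactSpace f)
  refine mem_interior.2 ⟨Metric.ball (⨍ a, f a ∂μ) δ, fun y hy => ?_, Metric.isOpen_ball,
    Metric.mem_ball_self hδ⟩
  have hshift : ⨍ a, (f a + (y - ⨍ a, f a ∂μ)) ∂μ = y := by
    rw [average_eq, integral_add hfi (integrable_const _), integral_const, smul_add, ← average_eq,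
      smul_smul, inv_mul_cancel₀ measureReal_univ_ne_zero, one_smul, add_sub_cancel]
  rw [← hshift]
  refine hs.average_mem hsc (ae_of_all _ fun a => interior_subset (hδs ?_))
    (hfi.add (integrable_const _))
  exact Metric.mem_thickening_iff.2 ⟨f a, mem_range_self a, by simpa [dist_eq_norm] using hy⟩

theorem apply_average_orbit_eq {K E : Type*} [Group K] [MeasurableSpace K] [MeasurableMul K]
    (μ : Measure K) [μ.IsMulLeftInvariant] [NormedAddCommGroup E] [NormedSpace ℝ E]
    (ρ : K →* (E →L[ℝ] E)ˣ) (v : E) (k : K) :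
    (ρ k : E →L[ℝ] E) (⨍ h, (ρ h : E →L[ℝ] E) v ∂μ) = ⨍ h, (ρ h : E →L[ℝ] E) v ∂μ := by
  simp only [average_eq']
  calc (ρ k : E →L[ℝ] E) (∫ h, (ρ h : E →L[ℝ] E) v ∂(μ univ)⁻¹ • μ)
      = ∫ h, (ρ k : E →L[ℝ] E) ((ρ h : E →L[ℝ] E) v) ∂(μ univ)⁻¹ • μ :=
        ((ContinuousLinearEquiv.unitsEquiv ℝ E (ρ k)).integral_comp_comm _).symm
    _ = ∫ h, (ρ (k * h) : E →L[ℝ] E) v ∂(μ univ)⁻¹ • μ := by simp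
    _ = ∫ h, (ρ h : E →L[ℝ] E) v ∂(μ univ)⁻¹ • μ :=
        integral_mul_left_eq_self (fun h => (ρ h : E →L[ℝ] E) v) k

section LinearGroups

variable {V : Type*} [NormedAddCommGroup V] [NormedSpace ℝ V] {C : Set V}

theorem isBounded_of_isBounded_image_apply [FiniteDimensional ℝ V] (hCclosed : IsClosed C)
    (hCcone : ∀ (t : ℝ) (v : V), 0 ≤ t → v ∈ C → t • v ∈ C) (hCpointed : C ∩ (-C) = {0})
    {S : Set (V →L[ℝ] V)} (hSC : ∀ A ∈ S, MapsTo A C C) {v : V} (hv : v ∈ interior C)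
    (hbdd : Bornology.IsBounded ((fun A : V →L[ℝ] V => A v) '' S)) : Bornology.IsBounded S := by
  obtain ⟨δ, hδ, hnormal⟩ :=
    exists_pos_mul_norm_le_of_sub_mem_of_add_mem hCclosed hCcone hCpointed
  obtain ⟨ε, hε, hball⟩ :=
    Metric.nhds_basis_closedBall.mem_iff.1 (mem_interior_iff_mem_nhds.1 hv)
  obtain ⟨R, hR⟩ := isBounded_iff_forall_norm_le.1 hbdd
  refine isBounded_iff_forall_norm_le.2 ⟨R / (δ * ε), fun A hA => ?_⟩
  calc ‖A‖ ≤ ‖A v‖ / (δ * ε) :=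
        A.opNorm_le_of_mapsTo_of_closedBall_subset hδ hε hnormal hball (hSC A hA)
    _ ≤ R / (δ * ε) := by gcongr; exact hR _ (mem_image_of_mem _ hA)

theorem exists_mem_interior_forall_apply_eq_of_isCompact [CompleteSpace V]
    {H : Subgroup (V →L[ℝ] V)ˣ} (hH : IsCompact (H : Set (V →L[ℝ] V)ˣ)) (hCconv : Convex ℝ C)
    (hCclosed : IsClosed C)
    (hHC : ∀ h ∈ H, MapsTo (h : V →L[ℝ] V) C C) {v : V} (hv : v ∈ interior C) :
    ∃ w ∈ interior C, ∀ h ∈ H, (h : V →L[ℝ] V) w = w := by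
  have : CompactSpace H := isCompact_iff_compactSpace.1 hH
  borelize ↥H
  have horbit : ∀ h : H, ((h : (V →L[ℝ] V)ˣ) : V →L[ℝ] V) v ∈ interior C := fun h =>
    interior_mono (hHC h h.2).image_subset <|
      (ContinuousLinearEquiv.unitsEquiv ℝ V h).toHomeomorph.isOpenMap.image_interior_subset C
        (mem_image_of_mem _ hv)
  exact ⟨_, hCconv.average_mem_interior_of_continuous (μ := Measure.haar) hCclosed
    (by fun_prop) horbit, fun k hk => apply_average_orbit_eq _ H.subtype v ⟨k, hk⟩⟩

theorem exists_mem_interior_forall_apply_eq_of_isCompact_closure [CompleteSpace V]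
    (G : Subgroup (V ≃L[ℝ] V))
    (hG : IsCompact (closure ((fun g : V ≃L[ℝ] V => (g : V →L[ℝ] V)) '' (G : Set (V ≃L[ℝ] V)))))
    (hCconv : Convex ℝ C) (hCclosed : IsClosed C) (hGC : ∀ g ∈ G, MapsTo g C C) {v : V}
    (hv : v ∈ interior C) : ∃ w ∈ interior C, ∀ g ∈ G, g w = w := by
  let S : Submonoid (V →L[ℝ] V) := G.toSubmonoid.map
    ((Units.coeHom _).comp (ContinuousLinearEquiv.unitsEquiv ℝ V).symm.toMonoidHom)
  have hSC : closure (S : Set (V →L[ℝ] V)) ⊆ {A | MapsTo A C C} :=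
    closure_minimal (by rintro - ⟨g, hg, rfl⟩; exact hGC g hg)
      (hCclosed.setOfPred_mapsTo fun c _ => continuous_eval_const c)
  obtain ⟨w, hw, hfix⟩ := exists_mem_interior_forall_apply_eq_of_isCompact
    (Submonoid.units_isCompact (S := S.topologicalClosure) hG) hCconv hCclosed
    (fun h hh => hSC hh.1) hv
  exact ⟨w, hw, fun g hg => hfix _ ⟨S.le_topologicalClosure ⟨g, hg, rfl⟩,
    S.le_topologicalClosure ⟨g⁻¹, G.inv_mem hg, rfl⟩⟩⟩

end LinearGroups

/-- Lemma 3.2 (eleco): for a subgroup `G` of `GL(V)` preserving a pointed generating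
closed convex cone `C` in a finite-dimensional real vector space, the following are
equivalent: (1) `G` has a fixed point in the interior of `C`; (2) `G` is bounded
(its closure is compact); (3) every `G`-orbit in `Int C` is bounded;
(4) some `G`-orbit in `Int C` is bounded. -/
theorem cone_group_elliptic_tfae
    {V : Type*} [NormedAddCommGroup V] [NormedSpace ℝ V] [FiniteDimensional ℝ V]
    (C : Set V) (hCclosed : IsClosed C) (hCconv : Convex ℝ C)
    (hCcone : ∀ (t : ℝ) (v : V), 0 ≤ t → v ∈ C → t • v ∈ C)
    (hCpointed : C ∩ (-C) = {(0 : V)})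
    (hCgen : ∀ v : V, ∃ c₁ ∈ C, ∃ c₂ ∈ C, v = c₁ - c₂)
    (G : Subgroup (V ≃L[ℝ] V))
    (hCinv : ∀ g ∈ G, g '' C = C) :
    List.TFAE
      [ ∃ v ∈ interior C, ∀ g ∈ G, g v = v,
        IsCompact (closure ((fun g : V ≃L[ℝ] V => (g : V →L[ℝ] V)) '' (G : Set (V ≃L[ℝ] V)))),
        ∀ v ∈ interior C, Bornology.IsBounded ((fun g : V ≃L[ℝ] V => g v) '' (G : Set (V ≃L[ℝ] V))),
        ∃ v ∈ interior C, Bornology.IsBounded ((fun g : V ≃L[ℝ] V => g v) '' (G : Set (V ≃L[ℝ] V))) ] := by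
  have hGC : ∀ g ∈ G, MapsTo g C C := fun g hg => mapsTo_iff_image_subset.2 (hCinv g hg).le
  obtain ⟨v₀, hv₀⟩ := hCconv.interior_nonempty_of_forall_eq_sub hCgen
  tfae_have 1 → 4 := fun ⟨v, hv, hfix⟩ =>
    ⟨v, hv, (Bornology.isBounded_singleton (x := v)).subset <| by
      rintro - ⟨g, hg, rfl⟩
      exact hfix g hg⟩
  tfae_have 4 → 2 := fun ⟨v, hv, hbdd⟩ => Bornology.IsBounded.isCompact_closure <|
    isBounded_of_isBounded_image_apply hCclosed hCcone hCpointed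
      (by rintro - ⟨g, hg, rfl⟩; exact hGC g hg) hv (by rwa [image_image])
  tfae_have 2 → 3 := fun hG v _ =>
    (hG.image (ContinuousLinearMap.apply ℝ V v).continuous).isBounded.subset <| by
      rintro - ⟨g, hg, rfl⟩
      exact mem_image_of_mem _ (subset_closure (mem_image_of_mem _ hg))
  tfae_have 3 → 4 := fun h => ⟨v₀, hv₀, h v₀ hv₀⟩
  tfae_have 2 → 1 := fun hG =>
    exists_mem_interior_forall_apply_eq_of_isCompact_closure G hG hCconv hCclosed hGC hv₀
  tfae_finish
end

section
/- Let Γ be a discrete group of affine transformations of Minkowski space V whose linear parts preserve the Lorentzian form ℓ and the cone C, acting freely and properly, such that the quotient V/Γ is causal. Then the linear part group G = λ(Γ) contains no hyperbolic element. -/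
open Set

/-! If the linear part `g` of `γ` preserves `ℓ` and `g v = μ v` with `μ > 0`, `μ ≠ 1`, then
`ℓ(v, v) = μ² ℓ(v, v)`, so `v` is null, and `ℓ(v, g u) = μ⁻¹ ℓ(v, u)`. Causality says every
displacement `γ x - x` is spacelike. Along the line `x + t v` the displacement moves by
`t (μ - 1) v`, and `v` is null, so `ℓ` of the displacement with itself is affine in `t`. It
stays negative for every `t`, so its slope `2 (μ - 1) ℓ(v, γ x - x)` vanishes. Expanding
`γ x - x = (g x - x) + γ 0` then gives `ℓ(v, ·) = 0`, and nondegeneracy of `ℓ` forces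
`v = 0`. -/

theorem IsLorentzian.separatingLeft {V : Type*} [AddCommGroup V] [Module ℝ V]
    {ℓ : V →ₗ[ℝ] V →ₗ[ℝ] ℝ} (hL : IsLorentzian ℓ) : ℓ.SeparatingLeft := by
  obtain ⟨-, n, e, horth, h0, hneg⟩ := hL
  refine LinearMap.IsOrthoᵢ.separatingLeft_of_not_isOrtho_basis_self e
    (fun i j hij => horth i j hij) fun i => ?_
  rcases eq_or_ne i 0 with rfl | hi
  · simp [h0]
  · simp [hneg i hi]

theorem eq_zero_of_forall_mul_add_neg {a b : ℝ} (h : ∀ t : ℝ, a * t + b < 0) : a = 0 := by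
  by_contra ha
  have := h ((1 - b) / a)
  rw [mul_div_cancel₀ _ ha] at this
  linarith

section

variable {V : Type*} [AddCommGroup V] [Module ℝ V] {ℓ : V →ₗ[ℝ] V →ₗ[ℝ] ℝ} {μ : ℝ} {v : V}

theorem eigenvalue_mul_apply_map_eq {g : V →ₗ[ℝ] V} (hg : ∀ u w, ℓ (g u) (g w) = ℓ u w)
    (hv : g v = μ • v) (u : V) : μ * ℓ v (g u) = ℓ v u := by
  simpa [hv] using hg v u

theorem apply_self_eq_zero_of_eigenvector {g : V →ₗ[ℝ] V} (hg : ∀ u w, ℓ (g u) (g w) = ℓ u w)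
    (hv : g v = μ • v) (hμ : μ ^ 2 ≠ 1) : ℓ v v = 0 := by
  have h := eigenvalue_mul_apply_map_eq hg hv v
  rw [hv, map_smul, smul_eq_mul] at h
  have : (μ ^ 2 - 1) * ℓ v v = 0 := by linear_combination h
  exact (mul_eq_zero.1 this).resolve_left (sub_ne_zero.2 hμ)

theorem AffineMap.apply_eq_zero_of_eigenvector_of_displacement_neg
    (hsymm : ∀ u w, ℓ u w = ℓ w u) (f : V →ᵃ[ℝ] V)
    (hf : ∀ u w, ℓ (f.linear u) (f.linear w) = ℓ u w)
    (hcausal : ∀ x, ℓ (f x - x) (f x - x) < 0) (hv : f.linear v = μ • v)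
    (hμ : μ ^ 2 ≠ 1) (u : V) : ℓ v u = 0 := by
  have hμ1 : μ - 1 ≠ 0 := fun h => hμ (by rw [sub_eq_zero.1 h, one_pow])
  have hnull := apply_self_eq_zero_of_eigenvector hf hv hμ
  have hdisp : ∀ x, f x - x = f.linear x - x + f 0 := fun x => by
    have h := f.linearMap_vsub x 0
    rw [vsub_eq_sub, vsub_eq_sub, sub_zero] at h
    rw [h]; abel
  have horth : ∀ x, ℓ v (f x - x) = 0 := by
    intro x
    have hline : ∀ t : ℝ, (2 * (μ - 1) * ℓ v (f x - x)) * t + ℓ (f x - x) (f x - x) < 0 := by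
      intro t
      have h := hcausal (t • v + x)
      have : f (t • v + x) - (t • v + x) = (t * (μ - 1)) • v + (f x - x) := by
        rw [hdisp, hdisp x, map_add, map_smul, hv]; module
      rw [this] at h
      simp only [map_add, map_smul, LinearMap.add_apply, LinearMap.smul_apply, smul_eq_mul,
        hnull, hsymm (f x - x) v] at h
      linarith
    have hslope := eq_zero_of_forall_mul_add_neg hline
    simpa [hμ1] using hslope
  have h0 : ℓ v (f 0) = 0 := by simpa using horth 0
  have hu := horth u
  rw [hdisp, map_add, map_sub, h0, add_zero] at hu
  have : (1 - μ) * ℓ v u = 0 := by linear_combination μ * hu - eigenvalue_mul_apply_map_eq hf hv u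
  exact (mul_eq_zero.1 this).resolve_left (by intro h; apply hμ1; linarith)

end

theorem causal_no_hyperbolic_general
    {V : Type*} [NormedAddCommGroup V] [NormedSpace ℝ V]
    (ℓ : V →ₗ[ℝ] V →ₗ[ℝ] ℝ) (hL : IsLorentzian ℓ)
    (C : Set V)
    (Γ : Subgroup (V ≃ᵃ[ℝ] V))
    (hpres : ∀ γ ∈ Γ, ∀ u w : V, ℓ (γ.linear u) (γ.linear w) = ℓ u w)
    (hcausal : ∀ v : V, ∀ γ ∈ Γ, γ ≠ 1 → ℓ (γ v - v) (γ v - v) < 0) :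
    ∀ γ ∈ Γ, ¬∃ (μ : ℝ) (v : V), v ≠ 0 ∧ v ∈ frontier C ∧
      γ.linear v = μ • v ∧ 0 < μ ∧ μ ≠ 1 := by
  rintro γ hγ ⟨μ, v, hv0, -, hv, hμpos, hμ1⟩
  have hγ1 : γ ≠ 1 := by
    rintro rfl
    exact hμ1 (smul_left_injective ℝ hv0 (hv.symm.trans (one_smul ℝ v).symm))
  have hμ2 : μ ^ 2 ≠ 1 := mt (pow_eq_one_iff_of_nonneg hμpos.le two_ne_zero).1 hμ1
  exact hv0 <| hL.separatingLeft v <|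
    γ.toAffineMap.apply_eq_zero_of_eigenvector_of_displacement_neg hL.1 (hpres γ hγ)
      (fun x => hcausal x γ hγ hγ1) hv hμ2

/-- Lemma 3.3 (hyper): if `Γ` is a discrete group of affine transformations of Minkowski
space acting freely and properly, with linear parts preserving `ℓ` and the cone `C`, and
the quotient `V/Γ` is causal, then the linear part group `G = λ(Γ)` contains no
hyperbolic element, i.e. no element with an eigenvector on `∂C` of positive eigenvalue
`≠ 1`. -/
theorem causal_no_hyperbolic
    {V : Type*} [NormedAddCommGroup V] [NormedSpace ℝ V] [FiniteDimensional ℝ V]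
    (ℓ : V →ₗ[ℝ] V →ₗ[ℝ] ℝ) (hL : IsLorentzian ℓ)
    (C : Set V) (hCclosed : IsClosed C) (hCconv : Convex ℝ C)
    (hCcone : ∀ (t : ℝ) (v : V), 0 ≤ t → v ∈ C → t • v ∈ C)
    (hCunion : C ∪ (-C) = {v : V | 0 ≤ ℓ v v})
    (hCpointed : C ∩ (-C) = {(0 : V)})
    (Γ : Subgroup (V ≃ᵃ[ℝ] V))
    (hpres : ∀ γ ∈ Γ, ∀ u w : V, ℓ (γ.linear u) (γ.linear w) = ℓ u w)
    (hCinv : ∀ γ ∈ Γ, γ.linear '' C = C)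
    (hfree : ∀ γ ∈ Γ, γ ≠ 1 → ∀ v : V, γ v ≠ v)
    (hproper : ∀ L : Set V, IsCompact L →
      {γ : V ≃ᵃ[ℝ] V | γ ∈ Γ ∧ (γ '' L ∩ L).Nonempty}.Finite)
    (hcausal : ∀ v : V, ∀ γ ∈ Γ, γ ≠ 1 → ℓ (γ v - v) (γ v - v) < 0) :
    ∀ γ ∈ Γ, ¬∃ (μ : ℝ) (v : V), v ≠ 0 ∧ v ∈ frontier C ∧
      γ.linear v = μ • v ∧ 0 < μ ∧ μ ≠ 1 :=
  causal_no_hyperbolic_general ℓ hL C Γ hpres hcausal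
end

section
/- Let v₀ ∈ ∂C be fixed by G = λ(Γ), with L = ℝv₀ and W = v₀^⊥, and suppose V/Γ is causal. If γ ∈ Γ satisfies L ⊆ V_γ = {λ(γ)v − v : v ∈ V}, then the translation part τ(γ) lies in W. -/
/-!
Along the line `t ↦ t • v` with `λ(γ) v - v = v₀`, the displacement of `γ` is `t • v₀ + τ(γ)`.
As `v₀` is lightlike, its Lorentzian square `2 t ℓ(τ(γ), v₀) + ℓ(τ(γ), τ(γ))` is affine in `t`;
causality keeps it nonpositive for every `t`, which forces the slope `ℓ(τ(γ), v₀)` to vanish.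
-/

open Set

theorem eq_zero_of_forall_mul_add_nonpos {𝕜 : Type*} [Field 𝕜] [LinearOrder 𝕜]
    [IsStrictOrderedRing 𝕜] {c q : 𝕜} (h : ∀ t : 𝕜, t * c + q ≤ 0) : c = 0 := by
  by_contra hc
  have := h ((1 - q) / c)
  rw [div_mul_cancel₀ _ hc] at this
  linarith

theorem LinearMap.apply_smul_add_self_of_isotropic {R V : Type*} [CommRing R]
    [AddCommGroup V] [Module R V] (ℓ : V →ₗ[R] V →ₗ[R] R)
    (hsymm : ∀ u w : V, ℓ u w = ℓ w u) {w : V} (hw : ℓ w w = 0) (u : V) (t : R) :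
    ℓ (t • w + u) (t • w + u) = t * (2 * ℓ u w) + ℓ u u := by
  simp only [map_add, map_smul, LinearMap.add_apply, LinearMap.smul_apply, smul_eq_mul, hw,
    hsymm w u]
  ring

theorem AffineMap.apply_smul_sub_smul_of_linear_sub_eq {R V : Type*} [CommRing R] [AddCommGroup V]
    [Module R V] (f : V →ᵃ[R] V) {v w : V} (hv : f.linear v - v = w) (t : R) :
    f (t • v) - t • v = t • w + f 0 := by
  rw [congrFun f.decomp, Pi.add_apply, map_smul, ← hv]
  module

theorem AffineMap.apply_zero_orthogonal_of_isotropic_eq_linear_sub {𝕜 V : Type*} [Field 𝕜]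
    [LinearOrder 𝕜] [IsStrictOrderedRing 𝕜] [AddCommGroup V] [Module 𝕜 V] (f : V →ᵃ[𝕜] V)
    (ℓ : V →ₗ[𝕜] V →ₗ[𝕜] 𝕜) (hsymm : ∀ u w : V, ℓ u w = ℓ w u)
    (hnonpos : ∀ x : V, ℓ (f x - x) (f x - x) ≤ 0) {v w : V} (hw : ℓ w w = 0)
    (hv : f.linear v - v = w) : ℓ (f 0) w = 0 := by
  have hslope : 2 * ℓ (f 0) w = 0 := eq_zero_of_forall_mul_add_nonpos fun t => by
    rw [← ℓ.apply_smul_add_self_of_isotropic hsymm hw,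
      ← f.apply_smul_sub_smul_of_linear_sub_eq hv]
    exact hnonpos _
  simpa using hslope

theorem translation_in_W_of_L_sub_Vgamma_general
    {V : Type*} [AddCommGroup V] [Module ℝ V]
    (ℓ : V →ₗ[ℝ] V →ₗ[ℝ] ℝ) (hL : IsLorentzian ℓ)
    (Γ : Subgroup (V ≃ᵃ[ℝ] V))
    (hcausal : ∀ v : V, ∀ γ ∈ Γ, γ ≠ 1 → ℓ (γ v - v) (γ v - v) < 0)
    (v₀ : V) (hv₀light : ℓ v₀ v₀ = 0)
    (γ : V ≃ᵃ[ℝ] V) (hγ : γ ∈ Γ)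
    (hLsub : ∃ v : V, γ.linear v - v = v₀) :
    ℓ (γ (0 : V)) v₀ = 0 := by
  obtain ⟨v, hv⟩ := hLsub
  refine γ.toAffineMap.apply_zero_orthogonal_of_isotropic_eq_linear_sub ℓ hL.1 (fun x => ?_)
    hv₀light hv
  rcases eq_or_ne γ 1 with rfl | hγ1
  · simp
  · exact (hcausal x γ hγ hγ1).le

/-- Lemma 3.8 (paral): let `v₀ ∈ ∂C` (a nonzero lightlike vector in `C`) be fixed by all
linear parts of the causal group `Γ`, `L = ℝv₀`, `W = v₀^⊥`. If `γ ∈ Γ` satisfies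
`L ⊆ V_γ = {λ(γ)v − v}`, then the translation part `τ(γ) = γ(0)` lies in `W`,
i.e. `ℓ(τ(γ), v₀) = 0`. -/
theorem translation_in_W_of_L_sub_Vgamma
    {V : Type*} [AddCommGroup V] [Module ℝ V]
    (ℓ : V →ₗ[ℝ] V →ₗ[ℝ] ℝ) (hL : IsLorentzian ℓ)
    (C : Set V)
    (hCcone : ∀ (t : ℝ) (v : V), 0 ≤ t → v ∈ C → t • v ∈ C)
    (hCconv : Convex ℝ C)
    (hCunion : C ∪ (-C) = {v : V | 0 ≤ ℓ v v})
    (hCpointed : C ∩ (-C) = {(0 : V)})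
    (Γ : Subgroup (V ≃ᵃ[ℝ] V))
    (hpres : ∀ γ ∈ Γ, ∀ u w : V, ℓ (γ.linear u) (γ.linear w) = ℓ u w)
    (hCinv : ∀ γ ∈ Γ, γ.linear '' C = C)
    (hcausal : ∀ v : V, ∀ γ ∈ Γ, γ ≠ 1 → ℓ (γ v - v) (γ v - v) < 0)
    (v₀ : V) (hv₀C : v₀ ∈ C) (hv₀ne : v₀ ≠ 0) (hv₀light : ℓ v₀ v₀ = 0)
    (hfix : ∀ γ ∈ Γ, γ.linear v₀ = v₀)
    (γ : V ≃ᵃ[ℝ] V) (hγ : γ ∈ Γ)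
    (hLsub : ∃ v : V, γ.linear v - v = v₀) :
    ℓ (γ (0 : V)) v₀ = 0 :=
  translation_in_W_of_L_sub_Vgamma_general ℓ hL Γ hcausal v₀ hv₀light γ hγ hLsub
end

section
/- Let v₀ ∈ ∂C be fixed by G = λ(Γ) and L = ℝv₀. For γ ∈ Γ, the element λ(γ) is elliptic (generates a bounded subgroup of GL(V)) if and only if V_γ ∩ L = {0}, where V_γ = {λ(γ)v − v : v ∈ V}. -/
/-!
If `g v - v = t • v₀` with `t ≠ 0`, then `g ^ n v = v + n t • v₀` grows linearly, so the powers
of `g` are unbounded. Conversely, `V_g = range (g - 1)` is `ℓ`-orthogonal to every `g`-fixed vector,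
in particular to `v₀`; on `v₀^⊥` the Lorentzian form is negative semidefinite with null
directions only along `ℝ v₀`, so `V_g ∩ ℝ v₀ = 0` makes `ℓ` negative definite on `V_g`. Hence
`V = V_g ⊕ ker (g - 1)`, and `g` is an isometry of the Euclidean form `-ℓ` on `V_g` and the identity
on `ker (g - 1)`: every orbit is bounded, and Banach–Steinhaus bounds the powers of `g`.
-/

open Set

theorem LinearMap.IsOrthoᵢ.apply_eq_sum {R M ι : Type*} [CommRing R] [AddCommGroup M]
    [Module R M] [Fintype ι] {B : M →ₗ[R] M →ₗ[R] R} {e : Module.Basis ι R M}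
    (he : B.IsOrthoᵢ e) (x y : M) :
    B x y = ∑ i, e.repr x i * e.repr y i * B (e i) (e i) := by
  conv_lhs => rw [← e.sum_repr x, ← e.sum_repr y]
  simp only [map_sum, map_smul, LinearMap.sum_apply, LinearMap.smul_apply, smul_eq_mul]
  refine Finset.sum_congr rfl fun i _ => ?_
  rw [Finset.sum_eq_single i (fun j _ hji => by rw [he hji, mul_zero]) (by simp)]
  ring

theorem LinearMap.exists_pos_mul_norm_sq_le_apply_self {E : Type*} [NormedAddCommGroup E]
    [NormedSpace ℝ E] [FiniteDimensional ℝ E] (B : E →ₗ[ℝ] E →ₗ[ℝ] ℝ)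
    (hB : ∀ x, x ≠ 0 → 0 < B x x) : ∃ c > 0, ∀ x, c * ‖x‖ ^ 2 ≤ B x x := by
  rcases subsingleton_or_nontrivial E with hE | hE
  · exact ⟨1, one_pos, fun x => by simp [Subsingleton.elim x 0]⟩
  have hcont : Continuous fun x => B x x :=
    (LinearMap.continuous_of_finiteDimensional
      (LinearMap.toContinuousLinearMap.toLinearMap ∘ₗ B)).clm_apply continuous_id
  obtain ⟨u₀, hu₀, hmin⟩ := (isCompact_sphere (0 : E) 1).exists_isMinOn
    (NormedSpace.sphere_nonempty.2 zero_le_one) hcont.continuousOn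
  refine ⟨B u₀ u₀, hB u₀ (ne_zero_of_mem_sphere one_ne_zero ⟨u₀, hu₀⟩), fun x => ?_⟩
  rcases eq_or_ne x 0 with rfl | hx
  · simp
  set u := ‖x‖⁻¹ • x
  have hu : u ∈ Metric.sphere (0 : E) 1 := by simp [u, norm_smul, hx]
  have hxu : x = ‖x‖ • u := by simp [u, smul_smul, hx]
  calc B u₀ u₀ * ‖x‖ ^ 2 ≤ B u u * ‖x‖ ^ 2 := by gcongr; exact hmin hu
    _ = B x x := by
      conv_rhs => rw [hxu]
      simp only [map_smul, LinearMap.smul_apply, smul_eq_mul]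
      ring

namespace IsLorentzian

variable {V : Type*} [AddCommGroup V] [Module ℝ V] {ℓ : V →ₗ[ℝ] V →ₗ[ℝ] ℝ}

theorem exists_forall_apply_self_neg (hL : IsLorentzian ℓ) :
    ∃ e₀ : V, ∀ y, ℓ y e₀ = 0 → y ≠ 0 → ℓ y y < 0 := by
  obtain ⟨-, n, e, horth, h0, hi⟩ := hL
  have he : ℓ.IsOrthoᵢ e := fun i j hij => horth i j hij
  refine ⟨e 0, fun y hy hy0 => ?_⟩
  have hy₀ : e.repr y 0 = 0 := by
    rw [he.apply_eq_sum] at hy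
    simpa [Finsupp.single_apply, h0] using hy
  have hyy : ℓ y y = -∑ i, e.repr y i ^ 2 := by
    rw [he.apply_eq_sum, ← Finset.sum_neg_distrib]
    refine Finset.sum_congr rfl fun i _ => ?_
    rcases eq_or_ne i 0 with rfl | hi0
    · simp [hy₀]
    · rw [hi i hi0]; ring
  obtain ⟨i, hi⟩ : ∃ i, e.repr y i ≠ 0 := by
    by_contra! h
    exact hy0 (e.repr.map_eq_zero_iff.1 (Finsupp.ext h))
  rw [hyy, neg_neg_iff_pos]
  exact Finset.sum_pos' (fun j _ => sq_nonneg _) ⟨i, Finset.mem_univ _, by positivity⟩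

theorem apply_self_neg_of_orthogonal_lightlike (hL : IsLorentzian ℓ) {v₀ x : V}
    (hv₀ : v₀ ≠ 0) (hnull : ℓ v₀ v₀ = 0) (hx : ℓ v₀ x = 0) (hxv : x ∉ ℝ ∙ v₀) :
    ℓ x x < 0 := by
  obtain ⟨e₀, he₀⟩ := hL.exists_forall_apply_self_neg
  have hβ : ℓ v₀ e₀ ≠ 0 := fun h => (he₀ v₀ h hv₀).ne hnull
  -- the projection of `x` to `e₀^⊥` along `v₀` has the same square as `x`
  set y := x - (ℓ x e₀ / ℓ v₀ e₀) • v₀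
  have hy : ℓ y e₀ = 0 := by
    simp only [y, map_sub, map_smul, LinearMap.sub_apply, LinearMap.smul_apply, smul_eq_mul]
    field_simp
    ring
  have hyy : ℓ y y = ℓ x x := by simp [y, hx, hL.1 x v₀, hnull]
  have hy0 : y ≠ 0 := fun h =>
    hxv (sub_eq_zero.1 h ▸ Submodule.smul_mem _ _ (Submodule.mem_span_singleton_self v₀))
  exact hyy ▸ he₀ y hy hy0

end IsLorentzian

namespace ContinuousLinearEquiv

section Module

variable {R M : Type*} [CommRing R] [AddCommGroup M] [Module R M] [TopologicalSpace M]
  {g : M ≃L[R] M}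

theorem zpow_apply_eq_self_of_apply_eq_self {x : M} (hx : g x = x) (m : ℤ) : (g ^ m) x = x :=
  zpow_induction_left (P := fun a : M ≃L[R] M => a x = x) rfl
    (fun _ ha => (congrArg g ha).trans hx)
    (fun _ ha => (congrArg g.symm ha).trans (g.symm_apply_eq.2 hx.symm)) m

theorem mem_range_sub_one_iff {x : M} :
    x ∈ LinearMap.range ((g : M →ₗ[R] M) - 1) ↔ ∃ v, g v - v = x := by
  simp

theorem zpow_apply_mem_range_sub_one {x : M} (hx : x ∈ LinearMap.range ((g : M →ₗ[R] M) - 1))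
    (m : ℤ) : (g ^ m) x ∈ LinearMap.range ((g : M →ₗ[R] M) - 1) := by
  obtain ⟨v, rfl⟩ := mem_range_sub_one_iff.1 hx
  refine mem_range_sub_one_iff.2 ⟨(g ^ m) v, ?_⟩
  rw [map_sub]
  exact congrArg (· - _) (DFunLike.congr_fun (Commute.self_zpow g m) v)

variable {N : Type*} [AddCommGroup N] [Module R N] {B : M →ₗ[R] M →ₗ[R] N}

theorem apply_zpow_zpow (hg : ∀ u w, B (g u) (g w) = B u w) (m : ℤ) (u w : M) :
    B ((g ^ m) u) ((g ^ m) w) = B u w := by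
  refine zpow_induction_left (P := fun a : M ≃L[R] M => B (a u) (a w) = B u w) rfl
    (fun a ha => (hg _ _).trans ha) (fun a ha => ?_) m
  rw [← ha, ← hg]
  exact congrArg₂ (B · ·) (g.apply_symm_apply _) (g.apply_symm_apply _)

theorem apply_eq_zero_of_apply_eq_self_of_mem_range (hg : ∀ u w, B (g u) (g w) = B u w)
    {x y : M} (hx : g x = x) (hy : y ∈ LinearMap.range ((g : M →ₗ[R] M) - 1)) : B x y = 0 := by
  obtain ⟨v, rfl⟩ := mem_range_sub_one_iff.1 hy
  calc B x (g v - v) = B (g x) (g v) - B x v := by rw [(B x).map_sub, hx]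
    _ = 0 := by rw [hg, sub_self]

end Module

theorem isCompl_range_ker_sub_one {K M N : Type*} [Field K] [AddCommGroup M] [Module K M]
    [TopologicalSpace M] [FiniteDimensional K M] [AddCommGroup N] [Module K N]
    {g : M ≃L[K] M} {B : M →ₗ[K] M →ₗ[K] N} (hg : ∀ u w, B (g u) (g w) = B u w)
    (hanis : ∀ x ∈ LinearMap.range ((g : M →ₗ[K] M) - 1), B x x = 0 → x = 0) :
    IsCompl (LinearMap.range ((g : M →ₗ[K] M) - 1)) (LinearMap.ker ((g : M →ₗ[K] M) - 1)) := by
  refine (Submodule.isCompl_iff_disjoint _ _ (LinearMap.finrank_range_add_finrank_ker _).ge).2 ?_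
  refine Submodule.disjoint_def.2 fun x hxr hxk => hanis x hxr ?_
  have hx : g x = x := by simpa [sub_eq_zero] using hxk
  exact apply_eq_zero_of_apply_eq_self_of_mem_range hg hx hxr

section Normed

variable {V : Type*} [NormedAddCommGroup V] [NormedSpace ℝ V] {g : V ≃L[ℝ] V}

theorem pow_apply_eq_add_smul {v w : V} (hw : g w = w) (hv : g v = v + w) (n : ℕ) :
    (g ^ n) v = v + (n : ℝ) • w := by
  induction n with
  | zero => rw [pow_zero, Nat.cast_zero, zero_smul, add_zero]; rfl
  | succ n ih =>
    rw [pow_succ']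
    change g ((g ^ n) v) = _
    rw [ih, map_add, map_smul, hv, hw]
    push_cast
    module

theorem apply_eq_self_of_bddAbove_norm_pow_apply {v : V}
    (hbdd : BddAbove (range fun n : ℕ => ‖(g ^ n) v‖)) (hfix : g (g v - v) = g v - v) :
    g v = v := by
  obtain ⟨C, hC⟩ := hbdd
  have hlin (n : ℕ) : n * ‖g v - v‖ ≤ C + ‖v‖ := by
    have horbit : ‖v + (n : ℝ) • (g v - v)‖ ≤ C := by
      rw [← pow_apply_eq_add_smul hfix (add_sub_cancel v (g v)).symm]
      exact hC ⟨n, rfl⟩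
    calc n * ‖g v - v‖ = ‖(v + (n : ℝ) • (g v - v)) - v‖ := by
          rw [add_sub_cancel_left, norm_smul, Real.norm_natCast]
      _ ≤ C + ‖v‖ := (norm_sub_le _ _).trans (by gcongr)
  by_contra hne
  have hpos : 0 < ‖g v - v‖ := norm_pos_iff.2 (sub_ne_zero.2 hne)
  obtain ⟨n, hn⟩ := exists_nat_gt ((C + ‖v‖) / ‖g v - v‖)
  exact (hlin n).not_gt ((div_lt_iff₀ hpos).1 hn)

variable [FiniteDimensional ℝ V] {B : V →ₗ[ℝ] V →ₗ[ℝ] ℝ}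

theorem bddAbove_norm_zpow_apply_of_mem_range (hg : ∀ u w, B (g u) (g w) = B u w)
    (hneg : ∀ x ∈ LinearMap.range ((g : V →ₗ[ℝ] V) - 1), x ≠ 0 → B x x < 0) {a : V}
    (ha : a ∈ LinearMap.range ((g : V →ₗ[ℝ] V) - 1)) :
    BddAbove (range fun m : ℤ => ‖(g ^ m) a‖) := by
  set W := LinearMap.range ((g : V →ₗ[ℝ] V) - 1)
  obtain ⟨c, hc, hcB⟩ := (-B.compl₁₂ W.subtype W.subtype).exists_pos_mul_norm_sq_le_apply_self
    fun x hx => by simpa using hneg x x.2 (by simpa using hx)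
  refine ⟨√(-B a a / c), ?_⟩
  rintro _ ⟨m, rfl⟩
  refine Real.le_sqrt_of_sq_le ((le_div_iff₀ hc).2 ?_)
  simpa [apply_zpow_zpow hg, mul_comm] using hcB ⟨_, zpow_apply_mem_range_sub_one ha m⟩

theorem bddAbove_norm_zpow_apply (hg : ∀ u w, B (g u) (g w) = B u w)
    (hneg : ∀ x ∈ LinearMap.range ((g : V →ₗ[ℝ] V) - 1), x ≠ 0 → B x x < 0) (v : V) :
    BddAbove (range fun m : ℤ => ‖(g ^ m) v‖) := by
  have hcompl := isCompl_range_ker_sub_one hg fun x hx hxx =>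
    by_contra fun h => (hneg x hx h).ne hxx
  obtain ⟨a, ha, b, hb, rfl⟩ := Submodule.mem_sup.1 (hcompl.sup_eq_top ▸ Submodule.mem_top (x := v))
  obtain ⟨C, hC⟩ := bddAbove_norm_zpow_apply_of_mem_range hg hneg ha
  have hgb : g b = b := by simpa [sub_eq_zero] using hb
  refine ⟨C + ‖b‖, ?_⟩
  rintro _ ⟨m, rfl⟩
  dsimp only
  rw [map_add, zpow_apply_eq_self_of_apply_eq_self hgb]
  exact (norm_add_le _ _).trans (by gcongr; exact hC ⟨m, rfl⟩)

theorem isCompact_closure_range_zpow_iff :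
    IsCompact (closure (range fun n : ℤ => ((g ^ n : V ≃L[ℝ] V) : V →L[ℝ] V))) ↔
      ∀ v, BddAbove (range fun n : ℤ => ‖(g ^ n) v‖) := by
  constructor
  · intro h v
    obtain ⟨C, hC⟩ := (h.isBounded.subset subset_closure).exists_norm_le
    refine ⟨C * ‖v‖, ?_⟩
    rintro _ ⟨n, rfl⟩
    exact ContinuousLinearMap.le_of_opNorm_le _ (hC _ ⟨n, rfl⟩) v
  · intro h
    obtain ⟨C, hC⟩ := banach_steinhaus (g := fun n : ℤ => ((g ^ n : V ≃L[ℝ] V) : V →L[ℝ] V))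
      fun v => (h v).imp fun C hC n => hC ⟨n, rfl⟩
    exact (isBounded_iff_forall_norm_le.2 ⟨C, by rintro _ ⟨n, rfl⟩; exact hC n⟩).isCompact_closure

end Normed

end ContinuousLinearEquiv

theorem elliptic_iff_Vgamma_inter_L_trivial_general
    {V : Type*} [NormedAddCommGroup V] [NormedSpace ℝ V] [FiniteDimensional ℝ V]
    (ℓ : V →ₗ[ℝ] V →ₗ[ℝ] ℝ) (hL : IsLorentzian ℓ)
    (g : V ≃L[ℝ] V)
    (hpres : ∀ u w : V, ℓ (g u) (g w) = ℓ u w)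
    (v₀ : V) (hv₀ne : v₀ ≠ 0) (hv₀light : ℓ v₀ v₀ = 0)
    (hfix : g v₀ = v₀) :
    IsCompact (closure (Set.range (fun n : ℤ => ((g ^ n : V ≃L[ℝ] V) : V →L[ℝ] V)))) ↔
      ∀ (v : V) (t : ℝ), g v - v = t • v₀ → g v = v := by
  rw [ContinuousLinearEquiv.isCompact_closure_range_zpow_iff]
  constructor
  · intro hbdd v t hvt
    refine g.apply_eq_self_of_bddAbove_norm_pow_apply ((hbdd v).mono ?_) ?_
    · rintro _ ⟨n, rfl⟩
      exact ⟨n, by simp⟩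
    · rw [hvt, map_smul, hfix]
  · intro hV
    have hneg : ∀ x ∈ LinearMap.range ((g : V →ₗ[ℝ] V) - 1), x ≠ 0 → ℓ x x < 0 := by
      intro x hx hx0
      refine hL.apply_self_neg_of_orthogonal_lightlike hv₀ne hv₀light
        (g.apply_eq_zero_of_apply_eq_self_of_mem_range hpres hfix hx) fun hxv => hx0 ?_
      obtain ⟨t, rfl⟩ := Submodule.mem_span_singleton.1 hxv
      obtain ⟨v, hv⟩ := ContinuousLinearEquiv.mem_range_sub_one_iff.1 hx
      rw [← hv, hV v t hv, sub_self]
    exact g.bddAbove_norm_zpow_apply hpres hneg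

/-- Lemma 3.9 (ellip): let `g ∈ O(ℓ)` preserve the cone `C` and fix the nonzero
lightlike vector `v₀ ∈ ∂C`, `L = ℝv₀`. Then `g` is elliptic (generates a relatively
compact subgroup of `GL(V)`) if and only if `V_g ∩ L = {0}`, where
`V_g = {g v − v : v ∈ V}`. -/
theorem elliptic_iff_Vgamma_inter_L_trivial
    {V : Type*} [NormedAddCommGroup V] [NormedSpace ℝ V] [FiniteDimensional ℝ V]
    (ℓ : V →ₗ[ℝ] V →ₗ[ℝ] ℝ) (hL : IsLorentzian ℓ)
    (C : Set V) (hCclosed : IsClosed C) (hCconv : Convex ℝ C)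
    (hCcone : ∀ (t : ℝ) (v : V), 0 ≤ t → v ∈ C → t • v ∈ C)
    (hCunion : C ∪ (-C) = {v : V | 0 ≤ ℓ v v})
    (hCpointed : C ∩ (-C) = {(0 : V)})
    (g : V ≃L[ℝ] V)
    (hpres : ∀ u w : V, ℓ (g u) (g w) = ℓ u w)
    (hCinv : g '' C = C)
    (v₀ : V) (hv₀C : v₀ ∈ C) (hv₀ne : v₀ ≠ 0) (hv₀light : ℓ v₀ v₀ = 0)
    (hfix : g v₀ = v₀) :
    IsCompact (closure (Set.range (fun n : ℤ => ((g ^ n : V ≃L[ℝ] V) : V →L[ℝ] V)))) ↔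
      ∀ (v : V) (t : ℝ), g v - v = t • v₀ → g v = v :=
  elliptic_iff_Vgamma_inter_L_trivial_general ℓ hL g hpres v₀ hv₀ne hv₀light hfix
end

section
/- Let Γ be an abelian group of affine transformations of a finite-dimensional real vector space V. Then there exist a point õ ∈ V and linear subspaces V₀, V₁ ⊆ V with V = V₀ ⊕ V₁ such that the affine subspace U = õ + V₀ is Γ-invariant, the action of Γ on U is by affine maps with unipotent linear parts, and Γ acts linearly on V₁ (i.e., V₁ is invariant under all linear parts and the induced action on V₁ has no translation component). -/
/-!
An affine map `f` of `V` becomes linear on `V × ℝ` as `f̂ (v, t) = (f.linear v + t • f 0, t)`,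
and `f` is recovered on the hyperplane `t = 1`. For `γ ∈ Γ` the maps `γ̂ - 1` commute, so
`V × ℝ = W₀ ⊕ W₁` where `W₀` is the zero weight space (all `γ̂ - 1` nilpotent) and `W₁` the
positive Fitting component of the abelian Lie algebra they span. Every `γ̂ - 1` takes values in
`V × {0}`, hence so does `W₁`; therefore `W₀` contains a point `(o, 1)`, and `V₀`, `V₁` are the
traces of `W₀`, `W₁` on `V × {0}`.
-/

-- The commutator bracket on `Module.End R M`, which Mathlib keeps as a local instance.
attribute [local instance] LieRing.ofAssociativeRing

lemma Module.End.apply_mem_iSup_range_of_mem_span {R M : Type*} [CommSemiring R] [AddCommMonoid M]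
    [Module R M] {T : Set (Module.End R M)} {y : Module.End R M} (hy : y ∈ Submodule.span R T)
    (m : M) : y m ∈ ⨆ x ∈ T, LinearMap.range x := by
  induction hy using Submodule.span_induction generalizing m with
  | mem x hx => exact Submodule.mem_iSup_of_mem x (Submodule.mem_iSup_of_mem hx ⟨m, rfl⟩)
  | zero => exact zero_mem _
  | add y z _ _ hy hz => exact add_mem (hy m) (hz m)
  | smul a y _ hy => exact Submodule.smul_mem _ a (hy m)

open LieModule in
theorem Module.End.exists_simultaneous_fitting_decomposition
    {R M : Type*} [CommRing R] [AddCommGroup M] [Module R M] [IsNoetherian R M] [IsArtinian R M]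
    (T : Set (Module.End R M)) (hT : ∀ x ∈ T, ∀ y ∈ T, Commute x y) :
    ∃ M₀ M₁ : Submodule R M, IsCompl M₀ M₁ ∧ M₁ ≤ ⨆ x ∈ T, LinearMap.range x ∧
      ∀ x ∈ T, M₀ ≤ M₀.comap x ∧ M₁ ≤ M₁.comap x ∧ ∃ n, M₀ ≤ LinearMap.ker (x ^ n) := by
  have hlie : ∀ x ∈ T, ∀ y ∈ T, ⁅x, y⁆ = 0 := fun x hx y hy ↦ by
    rw [Ring.lie_def, (hT x hx y hy).eq, sub_self]
  let L := LieSubalgebra.lieSpan R (Module.End R M) T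
  have : IsLieAbelian L := LieSubalgebra.isLieAbelian_lieSpan_iff.mpr hlie
  refine ⟨genWeightSpace M (0 : L → R), posFittingComp R L M,
    by simpa using isCompl_genWeightSpace_zero_posFittingComp R L M, ?_, fun x hx ↦ ?_⟩
  · rw [posFittingComp, LieSubmodule.iSup_toSubmodule]
    refine iSup_le fun y m hm ↦ ?_
    obtain ⟨m', rfl⟩ := (mem_posFittingCompOf R y m).mp hm 1
    have hy : (y : Module.End R M) ∈ Submodule.span R T := by
      rw [← LieSubalgebra.coe_lieSpan_eq_span_of_forall_lie_eq_zero hlie]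
      exact y.2
    simpa using apply_mem_iSup_range_of_mem_span hy m'
  · let x' : L := ⟨x, LieSubalgebra.subset_lieSpan hx⟩
    refine ⟨fun m hm ↦ ?_, fun m hm ↦ ?_, ?_⟩
    · exact (genWeightSpace M (0 : L → R)).lie_mem (x := x') hm
    · exact (posFittingComp R L M).lie_mem (x := x') hm
    · simpa [x'] using exists_genWeightSpace_zero_le_ker_of_isNoetherian R (M := M) x'

namespace Submodule

variable {R V W : Type*} [Ring R] [AddCommGroup V] [Module R V] [AddCommGroup W] [Module R W]
  {i : V →ₗ[R] W} {x : Module.End R W} {y : Module.End R V}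

lemma comap_le_comap_comap_of_comp_eq (h : x ∘ₗ i = i ∘ₗ y) {p : Submodule R W}
    (hp : p ≤ p.comap x) : p.comap i ≤ (p.comap i).comap y := by
  rw [← comap_comp, ← h, comap_comp]
  exact comap_mono hp

lemma comap_le_ker_pow_of_comp_eq (hi : Function.Injective i) (h : x ∘ₗ i = i ∘ₗ y)
    {p : Submodule R W} {n : ℕ} (hp : p ≤ LinearMap.ker (x ^ n)) :
    p.comap i ≤ LinearMap.ker (y ^ n) := by
  rw [← LinearMap.ker_comp_of_ker_eq_bot _ (LinearMap.ker_eq_bot.mpr hi),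
    ← Module.End.commute_pow_left_of_commute h n, LinearMap.ker_comp]
  exact comap_mono hp

lemma isCompl_comap_of_le_range (hi : Function.Injective i) {p q : Submodule R W}
    (h : IsCompl p q) (hq : q ≤ LinearMap.range i) : IsCompl (p.comap i) (q.comap i) := by
  constructor
  · rw [disjoint_iff, ← comap_inf, h.inf_eq_bot, comap_bot, LinearMap.ker_eq_bot.mpr hi]
  · have hrange : (LinearMap.range i).comap i = ⊤ := eq_top_iff.mpr fun v _ ↦ ⟨v, rfl⟩
    rw [codisjoint_iff]
    calc p.comap i ⊔ q.comap i = (LinearMap.range i ⊓ p).comap i ⊔ q.comap i := by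
          rw [comap_inf, hrange, top_inf_eq]
      _ = (LinearMap.range i ⊓ p ⊔ q).comap i := (comap_sup_of_injective hi inf_le_left hq).symm
      _ = ⊤ := by rw [inf_sup_assoc_of_le p hq, h.sup_eq_top, inf_top_eq, hrange]

end Submodule

namespace AffineMap

variable {k V : Type*} [Ring k] [AddCommGroup V] [Module k V]

lemma apply_eq_linear_add (f : V →ᵃ[k] V) (v : V) : f v = f.linear v + f 0 :=
  congrFun f.decomp v

def homogenization : (V →ᵃ[k] V) →* Module.End k (V × k) where
  toFun f :=
    { toFun p := (f.linear p.1 + p.2 • f 0, p.2)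
      map_add' p q :=
        Prod.ext (by simp only [Prod.fst_add, Prod.snd_add, map_add, add_smul]; abel) rfl
      map_smul' c p := by ext <;> simp [mul_smul, smul_add] }
  map_one' := by ext <;> simp [← linearHom_apply]
  map_mul' f g := by ext <;> simp [← linearHom_apply, apply_eq_linear_add f (g 0), smul_add]

@[simp]
lemma homogenization_apply (f : V →ᵃ[k] V) (p : V × k) :
    homogenization f p = (f.linear p.1 + p.2 • f 0, p.2) := rfl

lemma homogenization_comp_inl (f : V →ᵃ[k] V) :
    homogenization f ∘ₗ LinearMap.inl k V k = LinearMap.inl k V k ∘ₗ f.linear := by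
  ext <;> simp

lemma range_homogenization_sub_one_le (f : V →ᵃ[k] V) :
    LinearMap.range (homogenization f - 1) ≤ LinearMap.range (LinearMap.inl k V k) := by
  rintro _ ⟨p, rfl⟩
  exact ⟨f.linear p.1 + p.2 • f 0 - p.1, by ext <;> simp⟩

lemma homogenization_apply_one (f : V →ᵃ[k] V) (v : V) :
    homogenization f (v, 1) = (f v, 1) := by
  simp [apply_eq_linear_add f v]

lemma homogenization_sub_one_comp_inl (f : V →ᵃ[k] V) :
    (homogenization f - 1) ∘ₗ LinearMap.inl k V k =
      LinearMap.inl k V k ∘ₗ (f.linear - LinearMap.id) := by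
  rw [LinearMap.sub_comp, LinearMap.comp_sub, homogenization_comp_inl]
  rfl

variable {f : V →ᵃ[k] V} {W : Submodule k (V × k)}

lemma comap_inl_le_comap_linear (hW : W ≤ W.comap (homogenization f - 1)) :
    W.comap (LinearMap.inl k V k) ≤ (W.comap (LinearMap.inl k V k)).comap f.linear := by
  refine Submodule.comap_le_comap_comap_of_comp_eq (homogenization_comp_inl f) fun w hw ↦ ?_
  simpa using add_mem (Submodule.mem_comap.mp (hW hw)) hw

lemma comap_inl_le_ker_pow {n : ℕ} (hW : W ≤ LinearMap.ker ((homogenization f - 1) ^ n)) :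
    W.comap (LinearMap.inl k V k) ≤ LinearMap.ker ((f.linear - LinearMap.id) ^ n) :=
  Submodule.comap_le_ker_pow_of_comp_eq LinearMap.inl_injective
    (homogenization_sub_one_comp_inl f) hW

lemma sub_mem_comap_inl (hW : W ≤ W.comap (homogenization f - 1)) {o : V} (ho : (o, 1) ∈ W) :
    f o - o ∈ W.comap (LinearMap.inl k V k) := by
  have : (homogenization f - 1) (o, 1) = LinearMap.inl k V k (f o - o) := by
    rw [LinearMap.sub_apply, homogenization_apply_one]
    simp
  exact Submodule.mem_comap.mpr (this ▸ hW ho)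

end AffineMap

open AffineMap Submodule in
/-- Lemma 3.11 (aflid): an abelian group `Γ` of affine transformations of a
finite-dimensional real vector space `V` admits a point `õ` and a decomposition
`V = V₀ ⊕ V₁` into linear subspaces, invariant under all linear parts, such that the
affine subspace `U = õ + V₀` is `Γ`-invariant with all linear parts unipotent on `V₀`,
and `Γ` acts linearly on `V₁` (the translation parts, taken with origin `õ`,
lie in `V₀`). -/
theorem abelian_affine_decomposition
    {V : Type*} [AddCommGroup V] [Module ℝ V] [FiniteDimensional ℝ V]
    (Γ : Subgroup (V ≃ᵃ[ℝ] V))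
    (hab : ∀ γ ∈ Γ, ∀ ν ∈ Γ, γ * ν = ν * γ) :
    ∃ (o : V) (V₀ V₁ : Submodule ℝ V), IsCompl V₀ V₁ ∧
      ∀ γ ∈ Γ,
        (∀ v ∈ V₀, γ.linear v ∈ V₀) ∧
        (∀ v ∈ V₁, γ.linear v ∈ V₁) ∧
        γ o - o ∈ V₀ ∧
        ∃ n : ℕ, ∀ v ∈ V₀, (((γ.linear.toLinearMap - LinearMap.id : V →ₗ[ℝ] V) ^ n) : V →ₗ[ℝ] V) v = 0 := by
  let ι := LinearMap.inl ℝ V ℝ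
  let T := (fun γ : V ≃ᵃ[ℝ] V ↦ homogenization γ.toAffineMap - 1) '' Γ
  have hT : ∀ x ∈ T, ∀ y ∈ T, Commute x y := by
    rintro _ ⟨γ, hγ, rfl⟩ _ ⟨ν, hν, rfl⟩
    have : Commute γ.toAffineMap ν.toAffineMap :=
      congrArg AffineEquiv.toAffineMap (hab γ hγ ν hν)
    exact ((this.map homogenization).sub_right (.one_right _)).sub_left (.one_left _)
  obtain ⟨W₀, W₁, hW, hW₁T, hWT⟩ := Module.End.exists_simultaneous_fitting_decomposition T hT
  have hW₁ : W₁ ≤ LinearMap.range ι :=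
    hW₁T.trans (iSup₂_le fun _ ⟨γ, _, hx⟩ ↦ hx ▸ range_homogenization_sub_one_le _)
  obtain ⟨o, ho⟩ : ∃ o : V, (o, (1 : ℝ)) ∈ W₀ := by
    have : ((0 : V), (1 : ℝ)) ∈ W₀ ⊔ W₁ := hW.sup_eq_top ▸ mem_top
    obtain ⟨a, ha, _, hb, hsum⟩ := mem_sup.mp this
    obtain ⟨w, rfl⟩ := hW₁ hb
    rw [eq_sub_of_add_eq hsum] at ha
    exact ⟨-w, by simpa [ι] using ha⟩
  refine ⟨o, W₀.comap ι, W₁.comap ι, isCompl_comap_of_le_range LinearMap.inl_injective hW hW₁,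
    fun γ hγ ↦ ?_⟩
  obtain ⟨h₀, h₁, n, hn⟩ := hWT _ ⟨γ, hγ, rfl⟩
  exact ⟨comap_inl_le_comap_linear h₀, comap_inl_le_comap_linear h₁, sub_mem_comap_inl h₀ ho,
    n, comap_inl_le_ker_pow hn⟩
end

section
/- Let Γ be an abelian group of affine transformations of V, with γ(v) = λ(γ)v + τ(γ), such that every λ(γ) is unipotent and λ(γ)τ(γ) = τ(γ) for all γ ∈ Γ. Then λ(γ)τ(ν) = τ(ν) for all γ, ν ∈ Γ, and τ is a group homomorphism: τ(γ∘ν) = τ(γ) + τ(ν). -/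
private lemma affeq_apply_eq {V : Type*} [AddCommGroup V] [Module ℝ V]
    (e : V ≃ᵃ[ℝ] V) (v : V) : e v = e.linear v + e 0 := by
  have := e.map_vadd (0 : V) v
  simpa [vadd_eq_add] using this

private lemma affeq_linear_mul {V : Type*} [AddCommGroup V] [Module ℝ V]
    (e e' : V ≃ᵃ[ℝ] V) (v : V) : (e * e').linear v = e.linear (e'.linear v) := by
  have h1 : (e * e') v = e (e' v) := rfl
  rw [affeq_apply_eq (e * e') v, affeq_apply_eq e (e' v), affeq_apply_eq e' v,
    map_add] at h1
  have h0 : (e * e') 0 = e.linear (e' 0) + e 0 := by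
    have : (e * e') (0 : V) = e (e' 0) := rfl
    rw [this, affeq_apply_eq e (e' 0)]
  rw [h0] at h1
  rw [← add_sub_cancel_right ((e * e').linear v) (e.linear (e' 0) + e 0), h1]
  abel

private lemma unip_fix {V : Type*} [AddCommGroup V] [Module ℝ V]
    (L : V →ₗ[ℝ] V) (n : ℕ) (h : (L - LinearMap.id) ^ n = 0)
    (v : V) (hv : L (L v) = v) : L v = v := by
  set A : V →ₗ[ℝ] V := L - LinearMap.id with hA
  set w := L v - v with hwdef
  have hw : A w = (-2 : ℝ) • w := by
    rw [hA, hwdef]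
    simp only [LinearMap.sub_apply, LinearMap.id_apply, map_sub, hv]
    rw [show ((-2 : ℝ)) • (L v - v) = -((L v - v) + (L v - v)) by
      rw [neg_smul, two_smul]]
    abel
  have key : ∀ m : ℕ, (A ^ m) w = ((-2 : ℝ) ^ m) • w := by
    intro m
    induction m with
    | zero => simp
    | succ m ih =>
        rw [pow_succ', Module.End.mul_apply, ih, map_smul, hw, smul_smul,
          pow_succ, mul_comm]
  have h0 := key n
  rw [h, LinearMap.zero_apply] at h0
  have hne : ((-2 : ℝ) ^ n) ≠ 0 := pow_ne_zero _ (by norm_num)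
  have hw0 : w = 0 := (smul_eq_zero.mp h0.symm).resolve_left hne
  exact sub_eq_zero.mp hw0

/-- Lemma 3.14 (parfi), first part: let `Γ` be an abelian group of affine
transformations `γ(v) = λ(γ)v + τ(γ)` of `V` with all linear parts `λ(γ)` unipotent and
`λ(γ)τ(γ) = τ(γ)` for all `γ ∈ Γ`. Then `λ(γ)τ(ν) = τ(ν)` for all `γ, ν ∈ Γ`, and
`τ` is additive: `τ(γ∘ν) = τ(γ) + τ(ν)`. (Here `τ(γ) = γ(0)`.) -/
theorem unipotent_abelian_translations_fixed_and_additive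
    {V : Type*} [AddCommGroup V] [Module ℝ V]
    (Γ : Subgroup (V ≃ᵃ[ℝ] V))
    (hab : ∀ γ ∈ Γ, ∀ ν ∈ Γ, γ * ν = ν * γ)
    (hunip : ∀ γ ∈ Γ, ∃ n : ℕ,
      (((γ.linear.toLinearMap - LinearMap.id : V →ₗ[ℝ] V) ^ n) : V →ₗ[ℝ] V) = 0)
    (hfix : ∀ γ ∈ Γ, γ.linear (γ (0 : V)) = γ (0 : V)) :
    (∀ γ ∈ Γ, ∀ ν ∈ Γ, γ.linear (ν (0 : V)) = ν (0 : V)) ∧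
      (∀ γ ∈ Γ, ∀ ν ∈ Γ, γ (ν (0 : V)) = γ (0 : V) + ν (0 : V)) := by
  have main : ∀ γ ∈ Γ, ∀ ν ∈ Γ, γ.linear (ν (0 : V)) = ν (0 : V) := by
    intro γ hγ ν hν
    -- commutation of linear parts
    have hlincomm : ∀ v, γ.linear (ν.linear v) = ν.linear (γ.linear v) := by
      intro v
      have := congrArg (fun e : V ≃ᵃ[ℝ] V => e.linear v) (hab γ hγ ν hν)
      simpa [affeq_linear_mul] using this
    -- commutation applied at 0 : (*)
    have hstar : γ.linear (ν 0) + γ 0 = ν.linear (γ 0) + ν 0 := by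
      have hc : (γ * ν) (0 : V) = (ν * γ) (0 : V) := by rw [hab γ hγ ν hν]
      have h1 : (γ * ν) (0 : V) = γ (ν 0) := rfl
      have h2 : (ν * γ) (0 : V) = ν (γ 0) := rfl
      rw [h1, h2, affeq_apply_eq γ (ν 0), affeq_apply_eq ν (γ 0)] at hc
      exact hc
    -- λγ² τν = τν
    have hsq : γ.linear (γ.linear (ν 0)) = ν 0 := by
      have hmem : γ * ν ∈ Γ := mul_mem hγ hν
      have hf := hfix _ hmem
      have h0 : (γ * ν) (0 : V) = γ.linear (ν 0) + γ 0 := by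
        have : (γ * ν) (0 : V) = γ (ν 0) := rfl
        rw [this, affeq_apply_eq γ (ν 0)]
      rw [h0, affeq_linear_mul, map_add, map_add, ← hlincomm (ν 0), hfix ν hν,
        hlincomm (γ 0), hfix γ hγ] at hf
      -- hope hf : γ.linear (γ.linear (ν 0)) + γ.linear (ν.linear (γ 0)) = ...
      have hν0 : ν.linear (γ 0) = γ.linear (ν 0) + γ 0 - ν 0 := by
        rw [← add_sub_cancel_right (ν.linear (γ 0)) (ν 0), ← hstar]
      rw [hν0] at hf
      rw [← add_sub_cancel_right (γ.linear (γ.linear (ν 0)))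
        (γ.linear (ν 0) + γ 0 - ν 0), hf]
      abel
    obtain ⟨n, hn⟩ := hunip γ hγ
    exact unip_fix γ.linear.toLinearMap n hn (ν 0) hsq
  refine ⟨main, ?_⟩
  intro γ hγ ν hν
  rw [affeq_apply_eq γ (ν 0), main γ hγ ν hν, add_comm]
end

section
/- In the setting of the parabolic construction, with T ⊆ N a linear subspace, a : T → N an ℓ-symmetric linear map, and the affine action of T on V defined by γ_x(v) = ν(ax)v + x − ½ ℓ(ax,x) v₀: the action of the vector group T on V is free if and only if ker(1 + t·a) = 0 for all t ∈ ℝ (where 1 + t·a is viewed as the map T → N, x ↦ x + t·ax). -/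
/-- `ν(x)v = v + ℓ(v,v₀)x − (ℓ(v,x) + ½ ℓ(v,v₀) ℓ(x,x)) v₀`. -/
noncomputable def nuMap {V : Type*} [AddCommGroup V] [Module ℝ V]
    (ℓ : V →ₗ[ℝ] V →ₗ[ℝ] ℝ) (v₀ x : V) : V →ₗ[ℝ] V where
  toFun v := v + ℓ v v₀ • x - (ℓ v x + (1 / 2) * ℓ v v₀ * ℓ x x) • v₀
  map_add' u w := by
    simp only [map_add, LinearMap.add_apply]
    module
  map_smul' c v := by
    simp only [map_smul, LinearMap.smul_apply, RingHom.id_apply, smul_eq_mul]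
    module

/-!
The displacement `γ_x(v) - v` equals `(x + ℓ(v,v₀)·ax) - c·v₀` for a scalar `c`. Pairing with `v₁`
kills the first part (as `T, aT ⊥ v₁`) and shows `c = 0`, so `v` is fixed by `γ_x` exactly when
`x + ℓ(v,v₀)·ax = 0` and `c = 0`. Conversely, if `x + t·ax = 0` then `v = t·v₁` has
`ℓ(v,v₀) = t`, `ℓ(v,ax) = 0`, and then `c = ½ t ℓ(ax, x + t·ax) = 0`, so `t·v₁` is a fixed point.
-/

section

variable {V : Type*} [AddCommGroup V] [Module ℝ V] (ℓ : V →ₗ[ℝ] V →ₗ[ℝ] ℝ)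

/-- The paper's `γ_x` is `parabolicAffineMap ℓ v₀ (a x) x`. -/
noncomputable def parabolicAffineMap (v₀ y x v : V) : V :=
  nuMap ℓ v₀ y v + x - ((1 / 2) * ℓ y x) • v₀

variable {ℓ} {v₀ v₁ w x y v : V}

theorem parabolicAffineMap_sub_self :
    parabolicAffineMap ℓ v₀ y x v - v =
      (x + ℓ v v₀ • y) - (ℓ v y + 1 / 2 * ℓ v v₀ * ℓ y y + 1 / 2 * ℓ y x) • v₀ := by
  simp only [parabolicAffineMap, nuMap, LinearMap.coe_mk, AddHom.coe_mk]
  module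

theorem sub_smul_eq_zero_iff_of_pairing (hw : ℓ w v₁ = 0) (h01 : ℓ v₀ v₁ = 1) (c : ℝ) :
    w - c • v₀ = 0 ↔ w = 0 ∧ c = 0 := by
  constructor
  · intro h
    have hc : c = 0 := by simpa [hw, h01] using congrArg (ℓ · v₁) h
    exact ⟨by simpa [hc] using h, hc⟩
  · rintro ⟨rfl, rfl⟩
    simp

theorem parabolicAffineMap_eq_self_iff (hx : ℓ x v₁ = 0) (hy : ℓ y v₁ = 0) (h01 : ℓ v₀ v₁ = 1) :
    parabolicAffineMap ℓ v₀ y x v = v ↔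
      x + ℓ v v₀ • y = 0 ∧ ℓ v y + 1 / 2 * ℓ v v₀ * ℓ y y + 1 / 2 * ℓ y x = 0 := by
  rw [← sub_eq_zero, parabolicAffineMap_sub_self]
  exact sub_smul_eq_zero_iff_of_pairing (by simp [hx, hy]) h01 _

theorem parabolicAffineMap_smul_eq_self (hsymm : ∀ u w : V, ℓ u w = ℓ w u)
    (hy : ℓ y v₁ = 0) (h01 : ℓ v₀ v₁ = 1) {t : ℝ} (hxy : x + t • y = 0) :
    parabolicAffineMap ℓ v₀ y x (t • v₁) = t • v₁ := by
  have hx : x = -(t • y) := eq_neg_of_add_eq_zero_left hxy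
  subst hx
  have h10 : ℓ (t • v₁) v₀ = t := by simp [hsymm v₁ v₀, h01]
  rw [parabolicAffineMap_eq_self_iff (by simp [hy]) hy h01, h10]
  refine ⟨hxy, ?_⟩
  simp only [map_smul, map_neg, LinearMap.smul_apply, smul_eq_mul, hsymm v₁ y, hy]
  ring

end

theorem parabolic_action_free_iff_ker_general
    {V : Type*} [AddCommGroup V] [Module ℝ V]
    (ℓ : V →ₗ[ℝ] V →ₗ[ℝ] ℝ) (hL : IsLorentzian ℓ)
    (v₀ v₁ : V) (hv₀v₁ : ℓ v₀ v₁ = 1)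
    (T : Submodule ℝ V)
    (hT : ∀ x ∈ T, ℓ x v₀ = 0 ∧ ℓ x v₁ = 0)
    (a : T →ₗ[ℝ] V)
    (haN : ∀ x : T, ℓ (a x) v₀ = 0 ∧ ℓ (a x) v₁ = 0) :
    (∀ (x : T) (v : V),
        nuMap ℓ v₀ (a x) v + (x : V) - ((1 / 2) * ℓ (a x) (x : V)) • v₀ = v → x = 0) ↔
      (∀ (t : ℝ) (x : T), (x : V) + t • a x = 0 → x = 0) := by
  constructor
  · intro hfree t x hx
    exact hfree x (t • v₁) (parabolicAffineMap_smul_eq_self hL.1 (haN x).2 hv₀v₁ hx)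
  · intro hker x v hv
    exact hker _ x ((parabolicAffineMap_eq_self_iff (hT x x.2).2 (haN x).2 hv₀v₁).1 hv).1

/-- Lemma 3.16 (lastl), first part: in the parabolic construction (type (ii)), with
`T ⊆ N` a linear subspace and `a : T → N` an `ℓ`-symmetric linear map, the affine action
`γ_x(v) = ν(ax)v + x − ½ℓ(ax,x)v₀` of the vector group `T` on `V` is free if and only
if `ker(1 + t·a) = 0` for all `t ∈ ℝ`. -/
theorem parabolic_action_free_iff_ker
    {V : Type*} [AddCommGroup V] [Module ℝ V] [FiniteDimensional ℝ V]
    (ℓ : V →ₗ[ℝ] V →ₗ[ℝ] ℝ) (hL : IsLorentzian ℓ)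
    (v₀ v₁ : V) (hv₀ : ℓ v₀ v₀ = 0) (hv₁ : ℓ v₁ v₁ = 0) (hv₀v₁ : ℓ v₀ v₁ = 1)
    (T : Submodule ℝ V)
    (hT : ∀ x ∈ T, ℓ x v₀ = 0 ∧ ℓ x v₁ = 0)
    (a : T →ₗ[ℝ] V)
    (haN : ∀ x : T, ℓ (a x) v₀ = 0 ∧ ℓ (a x) v₁ = 0)
    (hasymm : ∀ x y : T, ℓ (a x) (y : V) = ℓ (x : V) (a y)) :
    (∀ (x : T) (v : V),
        nuMap ℓ v₀ (a x) v + (x : V) - ((1 / 2) * ℓ (a x) (x : V)) • v₀ = v → x = 0) ↔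
      (∀ (t : ℝ) (x : T), (x : V) + t • a x = 0 → x = 0) :=
  parabolic_action_free_iff_ker_general ℓ hL v₀ v₁ hv₀v₁ T hT a haN
end

section
/- Let Γ ⊂ Aff(V) be a virtually abelian group. Then there exists a finite-index abelian subgroup Γ̃ ⊆ Γ such that every affine transformation α normalizing Γ (α⁻¹Γα = Γ) also normalizes Γ̃ (α⁻¹Γ̃α = Γ̃). -/
/-!
The argument is pure group theory, applied to `Γ` itself. Let `Δ` be the FC-centre of `Γ`, the
elements whose centralizer has finite index. It contains every abelian subgroup of finite index,
so it has finite index, and it is preserved by every automorphism; hence its centralizer `Γ̃` is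
characteristic in `Γ` and is normalized by everything that normalizes `Γ`. Since `Δ` is generated
by an abelian finite-index subgroup `A` and finitely many representatives of `Δ / A`, each with a
finite-index centralizer, `Γ̃` has finite index; being the centralizer of a finite-index subgroup,
it lies in `Δ`, so it centralizes itself.
-/

namespace Subgroup

variable {G : Type*} [Group G]

variable (G) in
def fcCenter : Subgroup G where
  carrier := {g | (centralizer {g}).FiniteIndex}
  one_mem' := by
    rw [Set.mem_ofPred_eq, show centralizer {(1 : G)} = ⊤ from eq_top_iff.mpr fun k _ ↦
      mem_centralizer_singleton_iff.mpr (Commute.one_right k)]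
    infer_instance
  mul_mem' {a b} (ha : (centralizer {a}).FiniteIndex) (hb : (centralizer {b}).FiniteIndex) :=
    finiteIndex_of_le (H := centralizer {a} ⊓ centralizer {b}) fun k hk ↦
      mem_centralizer_singleton_iff.mpr <| Commute.mul_right
        (mem_centralizer_singleton_iff.mp hk.1) (mem_centralizer_singleton_iff.mp hk.2)
  inv_mem' {a} (ha : (centralizer {a}).FiniteIndex) :=
    finiteIndex_of_le fun k hk ↦ mem_centralizer_singleton_iff.mpr
      (Commute.inv_right (mem_centralizer_singleton_iff.mp hk))

theorem comap_centralizer_singleton (φ : G ≃* G) (g : G) :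
    (centralizer {φ g}).comap φ.toMonoidHom = centralizer {g} := by
  ext k
  simp only [mem_comap, mem_centralizer_singleton_iff, MulEquiv.coe_toMonoidHom, ← map_mul,
    φ.injective.eq_iff]

instance fcCenter_characteristic : (fcCenter G).Characteristic :=
  characteristic_iff_comap_le.mpr fun φ g (hg : (centralizer {φ g}).FiniteIndex) ↦
    ⟨by rw [← comap_centralizer_singleton φ, index_comap_of_surjective _ φ.surjective]
        exact hg.index_ne_zero⟩

theorem le_fcCenter (A : Subgroup G) [IsMulCommutative A] [A.FiniteIndex] : A ≤ fcCenter G :=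
  fun _ ha ↦ finiteIndex_of_le <| (le_centralizer A).trans <|
    centralizer_le (Set.singleton_subset_iff.mpr ha)

theorem le_closure_union_range_out (A D : Subgroup G) :
    D ≤ closure ((A : Set G) ∪ Set.range fun q : D ⧸ A.subgroupOf D ↦ (q.out : G)) := by
  intro d hd
  obtain ⟨a, ha⟩ := QuotientGroup.mk_out_eq_mul (A.subgroupOf D) ⟨d, hd⟩
  have hd : d = (QuotientGroup.mk (s := A.subgroupOf D) ⟨d, hd⟩).out * (a : D)⁻¹ := by
    rw [ha]; simp
  rw [hd]
  exact mul_mem (subset_closure (Or.inr ⟨_, rfl⟩))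
    (inv_mem (subset_closure (Or.inl a.2)))

theorem finiteIndex_centralizer_fcCenter (A : Subgroup G) [IsMulCommutative A] [A.FiniteIndex] :
    (centralizer (fcCenter G : Set G)).FiniteIndex := by
  set D := fcCenter G
  let r : D ⧸ A.subgroupOf D → G := fun q ↦ q.out
  have hr : ∀ q, (centralizer {r q}).FiniteIndex := fun q ↦ (q.out).2
  have key : A ⊓ ⨅ q, centralizer {r q} ≤ centralizer D := by
    calc A ⊓ ⨅ q, centralizer {r q}
        ≤ centralizer (A : Set G) ⊓ centralizer (Set.range r) := by
          rw [centralizer_eq_iInf (Set.range r), iInf_range]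
          exact inf_le_inf_right _ (le_centralizer A)
      _ ≤ centralizer ((A : Set G) ∪ Set.range r) := fun x hx h hh ↦ hh.elim (hx.1 h) (hx.2 h)
      _ = centralizer (closure ((A : Set G) ∪ Set.range r)) := (centralizer_closure _).symm
      _ ≤ centralizer D := centralizer_le (le_closure_union_range_out A D)
  have := finiteIndex_iInf hr
  exact finiteIndex_of_le key

theorem centralizer_le_fcCenter (D : Subgroup G) [D.FiniteIndex] :
    centralizer (D : Set G) ≤ fcCenter G :=
  fun _ hk ↦ finiteIndex_of_le fun d hd ↦ mem_centralizer_singleton_iff.mpr (hk d hd)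

theorem isMulCommutative_centralizer_fcCenter (A : Subgroup G) [IsMulCommutative A]
    [A.FiniteIndex] : IsMulCommutative (centralizer (fcCenter G : Set G)) :=
  have : (fcCenter G).FiniteIndex := finiteIndex_of_le (le_fcCenter A)
  le_centralizer_iff_isMulCommutative.mp (centralizer_le (centralizer_le_fcCenter _))

theorem normalizer_le_normalizer_map_subtype (H : Subgroup G) (K : Subgroup H)
    [K.Characteristic] : normalizer (H : Set G) ≤ normalizer (K.map H.subtype : Set G) := by
  intro g hg
  have hconj : ((MulAut.conj g : G ≃* G) : G →* G).comp H.subtype =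
      H.subtype.comp (H.normalizerMonoidHom ⟨g, hg⟩).toMonoidHom := by
    ext; simp
  rw [mem_normalizer_iff_map_conj_eq, map_map, hconj, ← map_map,
    characteristic_iff_map_eq.mp ‹_›]

end Subgroup

theorem virtually_abelian_characteristic_subgroup_general
    {V : Type*} [AddCommGroup V] [Module ℝ V]
    (Γ : Subgroup (V ≃ᵃ[ℝ] V))
    (hva : ∃ Γ' : Subgroup (V ≃ᵃ[ℝ] V), Γ' ≤ Γ ∧ Γ'.relIndex Γ ≠ 0 ∧
      ∀ a ∈ Γ', ∀ b ∈ Γ', a * b = b * a) :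
    ∃ Γt : Subgroup (V ≃ᵃ[ℝ] V), Γt ≤ Γ ∧ Γt.relIndex Γ ≠ 0 ∧
      (∀ a ∈ Γt, ∀ b ∈ Γt, a * b = b * a) ∧
      ∀ α : V ≃ᵃ[ℝ] V,
        (∀ γ : V ≃ᵃ[ℝ] V, γ ∈ Γ ↔ α⁻¹ * γ * α ∈ Γ) →
        (∀ γ : V ≃ᵃ[ℝ] V, γ ∈ Γt ↔ α⁻¹ * γ * α ∈ Γt) := by
  obtain ⟨Γ', -, hΓ'_index, hΓ'_comm⟩ := hva
  let A : Subgroup Γ := Γ'.subgroupOf Γ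
  have : A.FiniteIndex := ⟨hΓ'_index⟩
  have : IsMulCommutative A := ⟨⟨fun a b ↦ Subtype.ext <| Subtype.ext <| hΓ'_comm _ a.2 _ b.2⟩⟩
  let K : Subgroup Γ := Subgroup.centralizer (Subgroup.fcCenter Γ : Set Γ)
  have : IsMulCommutative K := Subgroup.isMulCommutative_centralizer_fcCenter A
  refine ⟨K.map Γ.subtype, Subgroup.map_subtype_le K, ?_, ?_, fun α hα ↦ ?_⟩
  · rw [Subgroup.relIndex, ← Subgroup.comap_subtype,
      Subgroup.comap_map_eq_self_of_injective Γ.subtype_injective]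
    exact (Subgroup.finiteIndex_centralizer_fcCenter A).index_ne_zero
  · rintro - ⟨a, ha, rfl⟩ - ⟨b, hb, rfl⟩
    exact congrArg (fun x : K ↦ ((x : Γ) : V ≃ᵃ[ℝ] V)) (mul_comm' (⟨a, ha⟩ : K) ⟨b, hb⟩)
  · exact Subgroup.mem_normalizer_iff''.mp <|
      Subgroup.normalizer_le_normalizer_map_subtype Γ K (Subgroup.mem_normalizer_iff''.mpr hα)

/-- Lemma 3.12 (vabab): a virtually abelian group `Γ` of affine transformations of a
finite-dimensional real vector space contains an abelian subgroup `Γ̃` of finite index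
such that any affine transformation `α` normalizing `Γ` also normalizes `Γ̃`. -/
theorem virtually_abelian_characteristic_subgroup
    {V : Type*} [AddCommGroup V] [Module ℝ V] [FiniteDimensional ℝ V]
    (Γ : Subgroup (V ≃ᵃ[ℝ] V))
    (hva : ∃ Γ' : Subgroup (V ≃ᵃ[ℝ] V), Γ' ≤ Γ ∧ Γ'.relIndex Γ ≠ 0 ∧
      ∀ a ∈ Γ', ∀ b ∈ Γ', a * b = b * a) :
    ∃ Γt : Subgroup (V ≃ᵃ[ℝ] V), Γt ≤ Γ ∧ Γt.relIndex Γ ≠ 0 ∧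
      (∀ a ∈ Γt, ∀ b ∈ Γt, a * b = b * a) ∧
      ∀ α : V ≃ᵃ[ℝ] V,
        (∀ γ : V ≃ᵃ[ℝ] V, γ ∈ Γ ↔ α⁻¹ * γ * α ∈ Γ) →
        (∀ γ : V ≃ᵃ[ℝ] V, γ ∈ Γt ↔ α⁻¹ * γ * α ∈ Γt) :=
  virtually_abelian_characteristic_subgroup_general Γ hva
end

section
/- Let g ∈ O(ℓ) fix the lightlike vector v₀ and preserve W = v₀^⊥, and let v₁ be lightlike with ℓ(v₀,v₁) = 1 and u₀ = g v₁ − v₁ ≠ 0. Then u₀ ∈ W, u₀ ∉ ℝv₀, ℓ(g u₀ − u₀, v₁) = −ℓ(u₀, u₀) ≠ 0, and g u₀ − u₀ is a nonzero multiple of v₀; consequently gⁿ v₁ = v₁ + n u₀ + (n(n−1)/2) p v₀ with p = −ℓ(u₀,u₀) > 0. -/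
/-- The computation in Lemma 3.13 (trudn), formulas (26)–(29): let `g ∈ O(ℓ)` fix the
lightlike vector `v₀`, act as the identity on `W/ℝv₀` (where `W = v₀^⊥`, on which
`ℓ` is negative definite modulo `ℝv₀`), and let `v₁` be lightlike with `ℓ(v₀,v₁) = 1`
and `u₀ = g v₁ − v₁ ≠ 0`. Then `u₀ ∈ W`, `u₀ ∉ ℝv₀`,
`ℓ(g u₀ − u₀, v₁) = −ℓ(u₀,u₀) > 0`, `g u₀ − u₀ = p v₀` with `p = −ℓ(u₀,u₀)`, and
`gⁿ v₁ = v₁ + n u₀ + (n(n−1)/2) p v₀`. -/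
theorem parabolic_power_formula
    {V : Type*} [AddCommGroup V] [Module ℝ V]
    (ℓ : V →ₗ[ℝ] V →ₗ[ℝ] ℝ)
    (hsymm : ∀ u w : V, ℓ u w = ℓ w u)
    (g : V ≃ₗ[ℝ] V)
    (hpres : ∀ u w : V, ℓ (g u) (g w) = ℓ u w)
    (v₀ v₁ : V) (hv₀ : ℓ v₀ v₀ = 0) (hv₁ : ℓ v₁ v₁ = 0) (hv₀v₁ : ℓ v₀ v₁ = 1)
    (hfix : g v₀ = v₀)
    (hWmod : ∀ w : V, ℓ w v₀ = 0 → ∃ t : ℝ, g w - w = t • v₀)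
    (hnegdef : ∀ w : V, ℓ w v₀ = 0 → (∀ t : ℝ, w ≠ t • v₀) → ℓ w w < 0)
    (u₀ : V) (hu₀def : u₀ = g v₁ - v₁) (hu₀ne : u₀ ≠ 0) :
    ℓ u₀ v₀ = 0 ∧
    (∀ t : ℝ, u₀ ≠ t • v₀) ∧
    ℓ (g u₀ - u₀) v₁ = -ℓ u₀ u₀ ∧
    0 < -ℓ u₀ u₀ ∧
    g u₀ - u₀ = (-ℓ u₀ u₀) • v₀ ∧
    ∀ n : ℕ, (g ^ n) v₁ =
      v₁ + (n : ℝ) • u₀ + (((n : ℝ) * ((n : ℝ) - 1) / 2) * (-ℓ u₀ u₀)) • v₀ := by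
  have hgv₁ : g v₁ = v₁ + u₀ := by rw [hu₀def]; abel
  -- u₀ ⊥ v₀
  have h1 : ℓ u₀ v₀ = 0 := by
    have h := hpres v₁ v₀
    rw [hfix] at h
    rw [hu₀def]
    simp only [map_sub, LinearMap.sub_apply, h, sub_self]
  -- ℓ u₀ v₁ = -ℓ u₀ u₀ / 2
  have h2 : ℓ u₀ v₁ = -ℓ u₀ u₀ / 2 := by
    have h := hpres v₁ v₁
    rw [hgv₁] at h
    simp only [map_add, LinearMap.add_apply, hv₁] at h
    have hs := hsymm v₁ u₀
    linarith
  -- u₀ not a multiple of v₀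
  have h3 : ∀ t : ℝ, u₀ ≠ t • v₀ := by
    intro t ht
    have e1 : ℓ u₀ u₀ = 0 := by
      rw [ht]; simp [hv₀]
    have e2 : ℓ u₀ v₁ = t := by
      rw [ht]; simp [hv₀v₁]
    rw [e1] at h2
    have : t = 0 := by rw [e2] at h2; linarith
    exact hu₀ne (by rw [ht, this, zero_smul])
  have h4 : ℓ u₀ u₀ < 0 := hnegdef u₀ h1 h3
  obtain ⟨s, hs⟩ := hWmod u₀ h1
  have hgu₀ : g u₀ = u₀ + s • v₀ := by
    have := hs; rw [sub_eq_iff_eq_add] at this; rw [this]; abel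
  -- compute ℓ (g u₀) v₀ = 0
  have hgu₀v₀ : ℓ (g u₀) v₀ = 0 := by
    have h := hpres u₀ v₀; rw [hfix] at h; rw [h, h1]
  -- compute ℓ (g u₀ - u₀) v₁
  have hkey : ℓ (g u₀ - u₀) v₁ = -ℓ u₀ u₀ := by
    have h := hpres u₀ v₁
    rw [hgv₁, hgu₀] at h
    simp only [map_add, LinearMap.add_apply, map_smul, LinearMap.smul_apply,
      smul_eq_mul] at h
    have hsv : ℓ v₀ u₀ = 0 := by rw [hsymm]; exact h1
    have hsv1 : ℓ u₀ v₀ = 0 := h1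
    rw [hgu₀]
    simp only [map_add, map_smul, LinearMap.add_apply, LinearMap.smul_apply,
      LinearMap.sub_apply, map_sub, smul_eq_mul, hsv, hsv1, hv₀, hv₀v₁] at *
    nlinarith [h2, h]
  have hseq : s = -ℓ u₀ u₀ := by
    have : ℓ (g u₀ - u₀) v₁ = s := by
      rw [hs]; simp [hv₀v₁]
    linarith [hkey, this]
  have h5 : g u₀ - u₀ = (-ℓ u₀ u₀) • v₀ := by rw [hs, hseq]
  have hgu₀' : g u₀ = u₀ + (-ℓ u₀ u₀) • v₀ := by
    rw [hgu₀, hseq]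
  refine ⟨h1, h3, hkey, by linarith, h5, ?_⟩
  intro n
  induction n with
  | zero => simp
  | succ n ih =>
    have hpow : (g ^ (n + 1)) v₁ = g ((g ^ n) v₁) := by
      rw [pow_succ']; rfl
    rw [hpow, ih]
    simp only [map_add, map_smul, hgv₁, hgu₀', hfix]
    push_cast
    match_scalars <;> ring
end

section
/- Let Γ act on V by γ_x(v) = λ(x)v + τ(x) as in the parabolic type (ii) with ℓ-symmetric a : T → N satisfying ker(1 + t·a) = 0 for all t. Then for all u, v ∈ V and x ∈ T: ℓ(γ_x(u) − v, γ_x(u) − v) = ℓ(x + l₀(v)·ax, x + l₀(u)·ax) + (terms affine in x). In particular, for fixed v and u in a small neighborhood of v, the quadratic part is negative definite in x, so only finitely many x ∈ Γ satisfy ℓ(γ_x(u) − v, γ_x(u) − v) ≥ 0; hence V/Γ is strictly causal. -/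
/-! Since `v₀` is null and orthogonal to `T` and `a T`, the `v₀`-component of `γ_x u` enters
`ℓ(γ_x u − v, γ_x u − v)` only through `ℓ(γ_x u − v, v₀) = l₀(u) − l₀(v)`, which does not depend
on `x`; so this is a quadratic polynomial in `x`, and at `u = v` its quadratic part is `ℓ(y, y)`
with `y = x + l₀(v)·ax`. Such `y` are orthogonal to the timelike vector `v₀ + v₁`, hence
spacelike, and nonzero for `x ≠ 0` by freeness. By compactness of the unit sphere of `T` the
quadratic part stays negative definite for `u` near `v`, so the `x` with
`ℓ(γ_x u − v, γ_x u − v) ≥ 0` stay bounded and only finitely many of them lie in `Γ`.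
Near `v` the saturation of the causal cone is then a finite union of closed sets. -/

open Set

/-- The parabolic affine action `γ_x(v) = ν(ax)v + x − ½ℓ(ax,x)v₀` of type (ii). -/
noncomputable def gammaAct {V : Type*} [AddCommGroup V] [Module ℝ V]
    (ℓ : V →ₗ[ℝ] V →ₗ[ℝ] ℝ) (v₀ : V) {T : Submodule ℝ V} (a : T →ₗ[ℝ] V)
    (x : T) (v : V) : V :=
  nuMap ℓ v₀ (a x) v + (x : V) - ((1 / 2) * ℓ (a x) (x : V)) • v₀

theorem LinearMap.continuous_uncurry_of_finiteDimensional {𝕜 E F G : Type*}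
    [NontriviallyNormedField 𝕜] [CompleteSpace 𝕜]
    [NormedAddCommGroup E] [NormedSpace 𝕜 E] [FiniteDimensional 𝕜 E]
    [NormedAddCommGroup F] [NormedSpace 𝕜 F] [FiniteDimensional 𝕜 F]
    [NormedAddCommGroup G] [NormedSpace 𝕜 G] [FiniteDimensional 𝕜 G]
    (B : E →ₗ[𝕜] F →ₗ[𝕜] G) : Continuous fun p : E × F => B p.1 p.2 :=
  have := isModuleTopologyOfFiniteDimensional (𝕜 := 𝕜) (E := E)
  have := isModuleTopologyOfFiniteDimensional (𝕜 := 𝕜) (E := F)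
  have := isModuleTopologyOfFiniteDimensional (𝕜 := 𝕜) (E := G)
  IsModuleTopology.continuous_bilinear_of_finite_left B

theorem IsLorentzian.exists_neg_on_ker {V : Type*} [AddCommGroup V] [Module ℝ V]
    {ℓ : V →ₗ[ℝ] V →ₗ[ℝ] ℝ} (hL : IsLorentzian ℓ) :
    ∃ f : V →ₗ[ℝ] ℝ, ∀ p, f p = 0 → p ≠ 0 → ℓ p p < 0 := by
  obtain ⟨-, n, e, horth, -, hneg⟩ := hL
  refine ⟨e.coord 0, fun p hp hp0 => ?_⟩
  rw [Module.Basis.coord_apply] at hp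
  have hdiag : ℓ p p = ∑ i, -e.repr p i ^ 2 := by
    conv_lhs => rw [← e.sum_repr p]
    simp only [map_sum, map_smul, LinearMap.sum_apply, LinearMap.smul_apply, smul_eq_mul]
    refine Finset.sum_congr rfl fun i _ => ?_
    rw [Finset.sum_eq_single i (fun j _ hj => by rw [horth j i hj, mul_zero]) (by simp)]
    rcases eq_or_ne i 0 with rfl | hi
    · simp [hp]
    · rw [hneg i hi]; ring
  obtain ⟨i, hi⟩ : ∃ i, e.repr p i ≠ 0 := by
    by_contra! h
    exact hp0 (e.repr.map_eq_zero_iff.mp (Finsupp.ext h))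
  rw [hdiag, Finset.sum_neg_distrib, neg_neg_iff_pos]
  exact Finset.sum_pos' (fun j _ => sq_nonneg _) ⟨i, Finset.mem_univ i, by positivity⟩

theorem IsLorentzian.neg_of_orthogonal_of_pos {V : Type*} [AddCommGroup V] [Module ℝ V]
    {ℓ : V →ₗ[ℝ] V →ₗ[ℝ] ℝ} (hL : IsLorentzian ℓ) {y z : V} (hz : 0 < ℓ z z)
    (hyz : ℓ y z = 0) (hy : y ≠ 0) : ℓ y y < 0 := by
  obtain ⟨f, hf⟩ := hL.exists_neg_on_ker
  have hfz : f z ≠ 0 := fun h =>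
    (hf z h (by rintro rfl; simp at hz)).not_gt hz
  -- Project `y` along `z` into `ker f`, where `ℓ` is negative definite.
  set c := f y / f z
  have hy' : y - c • z ≠ 0 := by
    intro h
    have hc : c * ℓ z z = 0 := by
      rw [← smul_eq_mul, ← LinearMap.smul_apply, ← map_smul, ← sub_eq_zero.mp h, hyz]
    rw [mul_eq_zero, or_iff_left hz.ne'] at hc
    rw [hc, zero_smul, sub_zero] at h
    exact hy h
  have hsplit : ℓ (y - c • z) (y - c • z) = ℓ y y + c ^ 2 * ℓ z z := by
    simp only [map_sub, map_smul, LinearMap.sub_apply, LinearMap.smul_apply, smul_eq_mul, hyz,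
      hL.1 z y]
    ring
  have hneg := hf (y - c • z) (by simp [c, div_mul_cancel₀ _ hfz]) hy'
  nlinarith [sq_nonneg c]

section Parabolic

variable {V : Type*} [AddCommGroup V] [Module ℝ V] {ℓ : V →ₗ[ℝ] V →ₗ[ℝ] ℝ} {v₀ : V}
  {T : Submodule ℝ V} (a : T →ₗ[ℝ] V)

theorem form_gammaAct_sub_eq (hs : ∀ u w : V, ℓ u w = ℓ w u) (hv₀ : ℓ v₀ v₀ = 0)
    (hT : ∀ x : T, ℓ x v₀ = 0) (ha : ∀ x : T, ℓ (a x) v₀ = 0) (u v : V) (x : T) :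
    ℓ (gammaAct ℓ v₀ a x u - v) (gammaAct ℓ v₀ a x u - v) =
      ℓ ((x : V) + ℓ v v₀ • a x) ((x : V) + ℓ u v₀ • a x) +
        2 * (ℓ (u - v) x + ℓ u v₀ * ℓ (u - v) (a x) - (ℓ u v₀ - ℓ v v₀) * ℓ u (a x)) +
        ℓ (u - v) (u - v) := by
  have hw : gammaAct ℓ v₀ a x u - v = (u - v) + ℓ u v₀ • a x + (x : V) -
      (ℓ u (a x) + (1 / 2) * ℓ u v₀ * ℓ (a x) (a x) + (1 / 2) * ℓ (a x) x) • v₀ := by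
    simp only [gammaAct, nuMap, LinearMap.coe_mk, AddHom.coe_mk]
    module
  rw [hw]
  simp only [map_add, map_sub, map_smul, LinearMap.add_apply, LinearMap.sub_apply,
    LinearMap.smul_apply, smul_eq_mul]
  rw [hs v₀ u, hs v₀ v, hs v₀ (a x), hs v₀ x, hs v u, hs (a x) u, hs x u, hs (a x) v, hs x v,
    hs x (a x), hT x, ha x, hv₀]
  ring

theorem exists_gammaAct_expansion (hs : ∀ u w : V, ℓ u w = ℓ w u) (hv₀ : ℓ v₀ v₀ = 0)
    (hT : ∀ x : T, ℓ x v₀ = 0) (ha : ∀ x : T, ℓ (a x) v₀ = 0) (u v : V) :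
    ∃ (c : ℝ) (φ : V →ₗ[ℝ] ℝ), ∀ x : T,
      ℓ (gammaAct ℓ v₀ a x u - v) (gammaAct ℓ v₀ a x u - v) =
        ℓ ((x : V) + ℓ v v₀ • a x) ((x : V) + ℓ u v₀ • a x) + φ x + c := by
  obtain ⟨a', ha'⟩ := a.exists_extend
  refine ⟨ℓ (u - v) (u - v), (2 : ℝ) • (ℓ (u - v) + ℓ u v₀ • ℓ (u - v) ∘ₗ a' -
    (ℓ u v₀ - ℓ v v₀) • ℓ u ∘ₗ a'), fun x => ?_⟩
  have hx : a' x = a x := LinearMap.congr_fun ha' x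
  simp only [form_gammaAct_sub_eq a hs hv₀ hT ha, LinearMap.smul_apply, LinearMap.add_apply,
    LinearMap.sub_apply, LinearMap.comp_apply, hx, smul_eq_mul]

end Parabolic

theorem exists_isOpen_norm_le_of_quadratic_nonneg {X E : Type*} [TopologicalSpace X]
    [NormedAddCommGroup E] [NormedSpace ℝ E] [ProperSpace E] {Q L : X → E → ℝ} {c : X → ℝ}
    (hQ : Continuous fun p : X × E => Q p.1 p.2) (hL : Continuous fun p : X × E => L p.1 p.2)
    (hc : Continuous c) (hQ₂ : ∀ u (r : ℝ) x, Q u (r • x) = r ^ 2 * Q u x)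
    (hL₁ : ∀ u (r : ℝ) x, L u (r • x) = r * L u x) {v : X} (hv : ∀ x ≠ 0, Q v x < 0) :
    ∃ U, v ∈ U ∧ IsOpen U ∧ ∃ R, ∀ u ∈ U, ∀ x, 0 ≤ Q u x + L u x + c u → ‖x‖ ≤ R := by
  -- `G (u, ρ) y = ρ² (Q u + L u + c u) (y / ρ)`, continuous up to `ρ = 0`.
  set G : X × ℝ → E → ℝ := fun p y => Q p.1 y + p.2 * L p.1 y + p.2 ^ 2 * c p.1
  have hG : Continuous fun q : (X × ℝ) × E => G q.1 q.2 := by fun_prop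
  have hnear : ∀ᶠ p in nhds (v, 0), ∀ y ∈ Metric.sphere (0 : E) 1, G p y < 0 := by
    refine (isCompact_sphere 0 1).eventually_forall_of_forall_eventually fun y hy => ?_
    refine hG.continuousAt.eventually (eventually_lt_nhds ?_)
    simpa [G] using hv y (Metric.ne_of_mem_sphere hy one_ne_zero)
  rw [nhds_prod_eq] at hnear
  obtain ⟨P, hP, R', hR', hPR⟩ := Filter.eventually_prod_iff.mp hnear
  obtain ⟨U, hPU, hU, hvU⟩ := eventually_nhds_iff.mp hP
  obtain ⟨δ, hδ, hδR⟩ := Metric.eventually_nhds_iff.mp hR'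
  refine ⟨U, hvU, hU, δ⁻¹, fun u hu x hx => ?_⟩
  by_contra! hxδ
  have hx0 : 0 < ‖x‖ := (inv_pos.mpr hδ).trans hxδ
  have hρ : dist ‖x‖⁻¹ 0 < δ := by
    rw [Real.dist_0_eq_abs, abs_inv, abs_norm]
    exact inv_lt_of_inv_lt₀ hδ hxδ
  have hy : ‖x‖⁻¹ • x ∈ Metric.sphere (0 : E) 1 := by
    rw [mem_sphere_zero_iff_norm, norm_smul, norm_inv, norm_norm, inv_mul_cancel₀ hx0.ne']
  have hGx : Q u x + L u x + c u = ‖x‖ ^ 2 * G (u, ‖x‖⁻¹) (‖x‖⁻¹ • x) := by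
    simp only [G, hQ₂, hL₁]
    field_simp
  have := hPR (hPU u hu) (hδR hρ) _ hy
  nlinarith [pow_pos hx0 2]

theorem exists_mem_of_mem_closure_of_finite {X Y ι : Type*} [TopologicalSpace X]
    [TopologicalSpace Y] {U : Set X} (hU : IsOpen U) {C : Set Y} (hC : IsClosed C)
    {P : ι → Prop} {f : ι → X → Y} (hf : ∀ i, Continuous (f i))
    (hfin : {i | P i ∧ ∃ u ∈ U, f i u ∈ C}.Finite) {w : X} (hwU : w ∈ U)
    (hw : w ∈ closure {u | ∃ i, P i ∧ f i u ∈ C}) : ∃ i, P i ∧ f i w ∈ C := by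
  have hsub : U ∩ {u | ∃ i, P i ∧ f i u ∈ C} ⊆
      ⋃ i ∈ {i | P i ∧ ∃ u ∈ U, f i u ∈ C}, f i ⁻¹' C := by
    rintro u ⟨hu, i, hi, hiu⟩
    exact mem_biUnion ⟨hi, u, hu, hiu⟩ hiu
  have hclosed := hfin.isClosed_biUnion fun i _ => hC.preimage (hf i)
  obtain ⟨i, hi, hwi⟩ := mem_iUnion₂.mp (hclosed.closure_subset_iff.mpr hsub
    (hU.inter_closure ⟨hwU, hw⟩))
  exact ⟨i, hi.1, hwi⟩

section NormedParabolic

variable {V : Type*} [NormedAddCommGroup V] [NormedSpace ℝ V] [FiniteDimensional ℝ V]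
  {ℓ : V →ₗ[ℝ] V →ₗ[ℝ] ℝ} {v₀ : V} {T : Submodule ℝ V} (a : T →ₗ[ℝ] V)

theorem continuous_gammaAct (x : T) : Continuous (gammaAct ℓ v₀ a x) := by
  unfold gammaAct
  fun_prop

theorem exists_isOpen_norm_le_of_gammaAct_nonneg (hs : ∀ u w : V, ℓ u w = ℓ w u)
    (hv₀ : ℓ v₀ v₀ = 0) (hT : ∀ x : T, ℓ x v₀ = 0) (ha : ∀ x : T, ℓ (a x) v₀ = 0)
    (hneg : ∀ (t : ℝ) (x : T), x ≠ 0 → ℓ ((x : V) + t • a x) ((x : V) + t • a x) < 0) (v : V) :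
    ∃ U, v ∈ U ∧ IsOpen U ∧ ∃ R, ∀ u ∈ U, ∀ x : T,
      0 ≤ ℓ (gammaAct ℓ v₀ a x u - v) (gammaAct ℓ v₀ a x u - v) → ‖x‖ ≤ R := by
  have := ℓ.continuous_uncurry_of_finiteDimensional
  obtain ⟨U, hvU, hU, R, hR⟩ := exists_isOpen_norm_le_of_quadratic_nonneg
    (Q := fun u (x : T) => ℓ ((x : V) + ℓ v v₀ • a x) ((x : V) + ℓ u v₀ • a x))
    (L := fun u (x : T) =>
      2 * (ℓ (u - v) x + ℓ u v₀ * ℓ (u - v) (a x) - (ℓ u v₀ - ℓ v v₀) * ℓ u (a x)))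
    (c := fun u => ℓ (u - v) (u - v)) (by fun_prop) (by fun_prop) (by fun_prop)
    (fun u r x => by
      simp only [map_smul, Submodule.coe_smul, map_add, LinearMap.add_apply,
        LinearMap.smul_apply, smul_eq_mul]
      ring)
    (fun u r x => by
      simp only [map_smul, Submodule.coe_smul, smul_eq_mul]
      ring)
    (fun x hx => hneg _ x hx)
  exact ⟨U, hvU, hU, R, fun u hu x hx => hR u hu x (form_gammaAct_sub_eq a hs hv₀ hT ha u v x ▸ hx)⟩

end NormedParabolic

theorem parabolic_quotient_strictly_causal_general
    {V : Type*} [NormedAddCommGroup V] [NormedSpace ℝ V] [FiniteDimensional ℝ V]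
    (ℓ : V →ₗ[ℝ] V →ₗ[ℝ] ℝ) (hL : IsLorentzian ℓ)
    (v₀ v₁ : V) (hv₀ : ℓ v₀ v₀ = 0) (hv₁ : ℓ v₁ v₁ = 0) (hv₀v₁ : ℓ v₀ v₁ = 1)
    (C : Set V) (hCclosed : IsClosed C) (hCsub : C ⊆ {w : V | 0 ≤ ℓ w w})
    (T : Submodule ℝ V)
    (hT : ∀ x ∈ T, ℓ x v₀ = 0 ∧ ℓ x v₁ = 0)
    (a : T →ₗ[ℝ] V)
    (haN : ∀ x : T, ℓ (a x) v₀ = 0 ∧ ℓ (a x) v₁ = 0)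
    (hker : ∀ (t : ℝ) (x : T), (x : V) + t • a x = 0 → x = 0)
    (Γ : AddSubgroup V)
    (hΓdisc : ∀ r : ℝ, {x ∈ (Γ : Set V) | ‖x‖ ≤ r}.Finite) :
    (∀ u v : V, ∃ (c : ℝ) (φ : V →ₗ[ℝ] ℝ), ∀ x : T,
      ℓ (gammaAct ℓ v₀ a x u - v) (gammaAct ℓ v₀ a x u - v) =
        ℓ ((x : V) + ℓ v v₀ • a x) ((x : V) + ℓ u v₀ • a x) + φ (x : V) + c) ∧
    (∀ v : V, ∃ U : Set V, v ∈ U ∧ IsOpen U ∧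
      {x : T | (x : V) ∈ Γ ∧ ∃ u ∈ U,
        0 ≤ ℓ (gammaAct ℓ v₀ a x u - v) (gammaAct ℓ v₀ a x u - v)}.Finite) ∧
    (∀ v : V, ∃ U : Set V, v ∈ U ∧ IsOpen U ∧
      (∀ w ∈ U, w ∈ closure {u : V | ∃ x : T, (x : V) ∈ Γ ∧ gammaAct ℓ v₀ a x u - v ∈ C}
        → ∃ x : T, (x : V) ∈ Γ ∧ gammaAct ℓ v₀ a x w - v ∈ C) ∧
      (∀ w ∈ U, w ∈ closure {u : V | ∃ x : T, (x : V) ∈ Γ ∧ v - gammaAct ℓ v₀ a x u ∈ C}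
        → ∃ x : T, (x : V) ∈ Γ ∧ v - gammaAct ℓ v₀ a x w ∈ C)) := by
  have hT₀ : ∀ x : T, ℓ x v₀ = 0 := fun x => (hT x x.2).1
  have ha₀ : ∀ x : T, ℓ (a x) v₀ = 0 := fun x => (haN x).1
  have hneg (t : ℝ) (x : T) (hx : x ≠ 0) : ℓ ((x : V) + t • a x) ((x : V) + t • a x) < 0 := by
    refine hL.neg_of_orthogonal_of_pos (z := v₀ + v₁) ?_ ?_ (mt (hker t x) hx)
    · simp only [map_add, LinearMap.add_apply, hv₀, hv₁, hv₀v₁, hL.1 v₁ v₀]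
      norm_num
    · simp [(hT x x.2).2, (haN x).2, hT₀, ha₀]
  have hfin (v : V) : ∃ U : Set V, v ∈ U ∧ IsOpen U ∧ {x : T | (x : V) ∈ Γ ∧ ∃ u ∈ U,
      0 ≤ ℓ (gammaAct ℓ v₀ a x u - v) (gammaAct ℓ v₀ a x u - v)}.Finite := by
    obtain ⟨U, hvU, hU, R, hR⟩ :=
      exists_isOpen_norm_le_of_gammaAct_nonneg a hL.1 hv₀ hT₀ ha₀ hneg v
    refine ⟨U, hvU, hU, ((hΓdisc R).preimage Subtype.val_injective.injOn).subset ?_⟩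
    rintro x ⟨hxΓ, u, hu, hx⟩
    exact ⟨hxΓ, hR u hu x hx⟩
  refine ⟨exists_gammaAct_expansion a hL.1 hv₀ hT₀ ha₀, hfin, fun v => ?_⟩
  obtain ⟨U, hvU, hU, hF⟩ := hfin v
  have hflip (p : V) : ℓ (v - p) (v - p) = ℓ (p - v) (p - v) := by
    rw [← neg_sub p v, map_neg, map_neg, LinearMap.neg_apply, neg_neg]
  refine ⟨U, hvU, hU, fun w hwU hw => ?_, fun w hwU hw => ?_⟩
  · refine exists_mem_of_mem_closure_of_finite hU hCclosed
      (fun x => (continuous_gammaAct a x).sub continuous_const) (hF.subset ?_) hwU hw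
    exact fun x ⟨hxΓ, u, hu, hxu⟩ => ⟨hxΓ, u, hu, hCsub hxu⟩
  · refine exists_mem_of_mem_closure_of_finite hU hCclosed
      (fun x => continuous_const.sub (continuous_gammaAct a x)) (hF.subset ?_) hwU hw
    exact fun x ⟨hxΓ, u, hu, hxu⟩ => ⟨hxΓ, u, hu, hflip _ ▸ hCsub hxu⟩

/-- The second half of Theorem 2.2 (reduc): for a parabolic action of type (ii)
satisfying the freeness condition `ker(1 + t·a) = 0`, one has the expansion (formula
(30)) `ℓ(γ_x(u) − v, γ_x(u) − v) = ℓ(x + l₀(v)·ax, x + l₀(u)·ax) + (affine in x)`;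
the quadratic part is negative definite, so near each point `v` only finitely many
`x ∈ Γ` give `ℓ(γ_x(u) − v, γ_x(u) − v) ≥ 0`, and hence the future and past
saturations of each point are closed near the point: `V/Γ` is strictly causal. -/
theorem parabolic_quotient_strictly_causal
    {V : Type*} [NormedAddCommGroup V] [NormedSpace ℝ V] [FiniteDimensional ℝ V]
    (ℓ : V →ₗ[ℝ] V →ₗ[ℝ] ℝ) (hL : IsLorentzian ℓ)
    (v₀ v₁ : V) (hv₀ : ℓ v₀ v₀ = 0) (hv₁ : ℓ v₁ v₁ = 0) (hv₀v₁ : ℓ v₀ v₁ = 1)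
    (C : Set V) (hCclosed : IsClosed C) (hCsub : C ⊆ {w : V | 0 ≤ ℓ w w})
    (T : Submodule ℝ V)
    (hT : ∀ x ∈ T, ℓ x v₀ = 0 ∧ ℓ x v₁ = 0)
    (a : T →ₗ[ℝ] V)
    (haN : ∀ x : T, ℓ (a x) v₀ = 0 ∧ ℓ (a x) v₁ = 0)
    (hasymm : ∀ x y : T, ℓ (a x) (y : V) = ℓ (x : V) (a y))
    (hker : ∀ (t : ℝ) (x : T), (x : V) + t • a x = 0 → x = 0)
    (Γ : AddSubgroup V) (hΓT : (Γ : Set V) ⊆ (T : Set V))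
    (hΓdisc : ∀ r : ℝ, {x ∈ (Γ : Set V) | ‖x‖ ≤ r}.Finite) :
    (∀ u v : V, ∃ (c : ℝ) (φ : V →ₗ[ℝ] ℝ), ∀ x : T,
      ℓ (gammaAct ℓ v₀ a x u - v) (gammaAct ℓ v₀ a x u - v) =
        ℓ ((x : V) + ℓ v v₀ • a x) ((x : V) + ℓ u v₀ • a x) + φ (x : V) + c) ∧
    (∀ v : V, ∃ U : Set V, v ∈ U ∧ IsOpen U ∧
      {x : T | (x : V) ∈ Γ ∧ ∃ u ∈ U,
        0 ≤ ℓ (gammaAct ℓ v₀ a x u - v) (gammaAct ℓ v₀ a x u - v)}.Finite) ∧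
    (∀ v : V, ∃ U : Set V, v ∈ U ∧ IsOpen U ∧
      (∀ w ∈ U, w ∈ closure {u : V | ∃ x : T, (x : V) ∈ Γ ∧ gammaAct ℓ v₀ a x u - v ∈ C}
        → ∃ x : T, (x : V) ∈ Γ ∧ gammaAct ℓ v₀ a x w - v ∈ C) ∧
      (∀ w ∈ U, w ∈ closure {u : V | ∃ x : T, (x : V) ∈ Γ ∧ v - gammaAct ℓ v₀ a x u ∈ C}
        → ∃ x : T, (x : V) ∈ Γ ∧ v - gammaAct ℓ v₀ a x w ∈ C)) :=
  parabolic_quotient_strictly_causal_general ℓ hL v₀ v₁ hv₀ hv₁ hv₀v₁ C hCclosed hCsub T hT a haN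
    hker Γ hΓdisc
end
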